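/- arXiv:1911.09580 — 6 statements merged into one kernel-verified Lean document; each statement's English description precedes it below -/
import Mathlib

section
/- Let μ₁, μ₂ be probability measures on [0,∞) with mean 1, G_{μᵢ}(r) := μᵢ([r,∞)), Λ_{μᵢ}(λ) := log((λ+1)∫₀^∞ G_{μᵢ}(z) z^λ dz), each finite on a neighborhood of 0. Suppose there exists r₀ > 0 such that G_{μ₁}(r) ≥ G_{μ₂}(r) for all r ∈ [0, r₀] and G_{μ₁}(r) ≤ G_{μ₂}(r) for all r > r₀. Then for any probability measure P, U^{μ₁}(P) ⊂ U^{μ₂}(P). -/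
open MeasureTheory Real Set Filter
open scoped ENNReal Classical

variable {Ω : Type*} [MeasurableSpace Ω]

/-- Auxiliary Rényi divergence for `α ∈ (0,1) ∪ (1,∞)`:
`R_α(Q‖P) = (α(α-1))⁻¹ log ∫_{p>0} q^α p^{1-α} dν` with `ν = P + Q`,
and `+∞` if `α > 1` and `Q` is not absolutely continuous w.r.t. `P`. -/
noncomputable def renyiDivAux (α : ℝ) (Q P : Measure Ω) : EReal :=
  if 1 < α ∧ ¬ Q ≪ P then (⊤ : EReal)
  else ((α * (α - 1))⁻¹ : ℝ) *
    ENNReal.log (∫⁻ x in {x | 0 < P.rnDeriv (P + Q) x},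
      (Q.rnDeriv (P + Q) x) ^ α * (P.rnDeriv (P + Q) x) ^ (1 - α) ∂(P + Q))

/-- Rényi divergence of order `α ∈ ℝ \ {0,1}`, extended to negative orders by
`R_α(Q‖P) = R_{1-α}(P‖Q)`. -/
noncomputable def renyiDiv (α : ℝ) (Q P : Measure Ω) : EReal :=
  if α < 0 then renyiDivAux (1 - α) P Q else renyiDivAux α Q P

/-- Relative entropy (KL divergence): `R(Q‖P) = ∫ log(dQ/dP) dQ` if `Q ≪ P`, else `+∞`. -/
noncomputable def relEnt (Q P : Measure Ω) : EReal :=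
  if Q ≪ P then ((∫ x, Real.log (Q.rnDeriv P x).toReal ∂Q : ℝ) : EReal) else ⊤

/-- Cumulant generating function of `log (dQ/dP)` under `Q`:
`Λ_Q^{log dQ/dP}(λ) = log E_Q[(dQ/dP)^λ]`. -/
noncomputable def cgfLLR (Q P : Measure Ω) (l : ℝ) : EReal :=
  ENNReal.log (∫⁻ x, (Q.rnDeriv P x) ^ l ∂Q)

/-- Rényi-divergence ambiguity set `U^Λ(P)`. -/
def ambiguitySet (L : ℝ → EReal) (P : Measure Ω) : Set (Measure Ω) :=
  {Q | IsProbabilityMeasure Q ∧ Q ≪ P ∧ ∀ l > 0, cgfLLR Q P l ≤ L l}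

/-- Addition on `EReal` with the convention `-∞ + ∞ = ∞`. -/
noncomputable def EReal.addTop (x y : EReal) : EReal := if x = ⊤ ∨ y = ⊤ then ⊤ else x + y

/-- `G(r) = P(dQ/dP ≥ r)`. -/
noncomputable def tailG (Q P : Measure Ω) (r : ℝ) : ℝ≥0∞ :=
  P {x | ENNReal.ofReal r ≤ Q.rnDeriv P x}

/-- The distribution of `dQ/dP` under `P` (as a measure on `ℝ`). -/
noncomputable def likDist (Q P : Measure Ω) : Measure ℝ :=
  P.map (fun x => (Q.rnDeriv P x).toReal)

/-- `G_μ(r) = μ([r,∞))`. -/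
noncomputable def Gmu (μ : Measure ℝ) (r : ℝ) : ℝ≥0∞ := μ (Set.Ici r)

/-- `Λ_μ(λ) = log((λ+1) ∫₀^∞ G_μ(z) z^λ dz)`. -/
noncomputable def Lmu (μ : Measure ℝ) (l : ℝ) : EReal :=
  ENNReal.log (ENNReal.ofReal (l + 1) *
    ∫⁻ z in Set.Ioi (0 : ℝ), Gmu μ z * ENNReal.ofReal (z ^ l))

/-- The ambiguity set `U^μ(P) = U^{Λ_μ}(P)`. -/
def Umu (μ : Measure ℝ) (P : Measure Ω) : Set (Measure Ω) := ambiguitySet (Lmu μ) P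



lemma Gmu_antitone (μ : Measure ℝ) : Antitone (Gmu μ) :=
  fun a b hab => measure_mono (Set.Ici_subset_Ici.2 hab)

lemma Gmu_lintegral_eq_one (μ : Measure ℝ) (hsupp : μ (Set.Iio 0) = 0)
    (hmean : (∫⁻ t, ENNReal.ofReal t ∂μ) = 1) :
    (∫⁻ z in Set.Ioi (0 : ℝ), Gmu μ z) = 1 := by
  have hnn : 0 ≤ᵐ[μ] (fun t : ℝ => t) := by
    rw [Filter.EventuallyLE, ae_iff]
    simpa [Set.Iio] using hsupp
  have := MeasureTheory.lintegral_eq_lintegral_meas_le μ hnn aemeasurable_id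
  rw [← hmean, this]
  rfl

lemma swap_ineq {a b x y : ℝ≥0∞} (hab : a ≤ b) (hxy : x ≤ y) :
    b * x + a * y ≤ a * x + b * y := by
  rcases exists_add_of_le hab with ⟨d, rfl⟩
  calc (a + d) * x + a * y = a * x + a * y + d * x := by ring
    _ ≤ a * x + a * y + d * y := by gcongr
    _ = a * x + (a + d) * y := by ring

lemma key_ineq (μ₁ μ₂ : Measure ℝ)
    [IsProbabilityMeasure μ₁] [IsProbabilityMeasure μ₂]
    (hsupp₁ : μ₁ (Set.Iio 0) = 0) (hsupp₂ : μ₂ (Set.Iio 0) = 0)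
    (hmean₁ : (∫⁻ t, ENNReal.ofReal t ∂μ₁) = 1)
    (hmean₂ : (∫⁻ t, ENNReal.ofReal t ∂μ₂) = 1)
    (r₀ : ℝ) (hr₀ : 0 < r₀)
    (h₁ : ∀ r : ℝ, 0 ≤ r → r ≤ r₀ → Gmu μ₂ r ≤ Gmu μ₁ r)
    (h₂ : ∀ r : ℝ, r₀ < r → Gmu μ₁ r ≤ Gmu μ₂ r)
    (l : ℝ) (hl : 0 < l) :
    (∫⁻ z in Set.Ioi (0 : ℝ), Gmu μ₁ z * ENNReal.ofReal (z ^ l)) ≤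
    (∫⁻ z in Set.Ioi (0 : ℝ), Gmu μ₂ z * ENNReal.ofReal (z ^ l)) := by
  set c : ℝ≥0∞ := ENNReal.ofReal (r₀ ^ l) with hc
  have hm1 : Measurable (Gmu μ₁) := (Gmu_antitone μ₁).measurable
  have hm2 : Measurable (Gmu μ₂) := (Gmu_antitone μ₂).measurable
  have hpt : ∀ z ∈ Set.Ioi (0 : ℝ),
      Gmu μ₁ z * ENNReal.ofReal (z ^ l) + Gmu μ₂ z * c ≤
      Gmu μ₂ z * ENNReal.ofReal (z ^ l) + Gmu μ₁ z * c := by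
    intro z hz
    have hz0 : (0 : ℝ) < z := hz
    rcases le_or_gt z r₀ with hle | hlt
    · have hG : Gmu μ₂ z ≤ Gmu μ₁ z := h₁ z hz0.le hle
      have hxc : ENNReal.ofReal (z ^ l) ≤ c :=
        ENNReal.ofReal_le_ofReal (Real.rpow_le_rpow hz0.le hle hl.le)
      exact swap_ineq hG hxc
    · have hG : Gmu μ₁ z ≤ Gmu μ₂ z := h₂ z hlt
      have hxc : c ≤ ENNReal.ofReal (z ^ l) :=
        ENNReal.ofReal_le_ofReal (Real.rpow_le_rpow hr₀.le hlt.le hl.le)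
      have := swap_ineq hG hxc
      calc Gmu μ₁ z * ENNReal.ofReal (z ^ l) + Gmu μ₂ z * c
          = Gmu μ₂ z * c + Gmu μ₁ z * ENNReal.ofReal (z ^ l) := by ring
        _ ≤ Gmu μ₁ z * c + Gmu μ₂ z * ENNReal.ofReal (z ^ l) := this
        _ = Gmu μ₂ z * ENNReal.ofReal (z ^ l) + Gmu μ₁ z * c := by ring
  have hint : (∫⁻ z in Set.Ioi (0 : ℝ), (Gmu μ₁ z * ENNReal.ofReal (z ^ l) + Gmu μ₂ z * c)) ≤
      (∫⁻ z in Set.Ioi (0 : ℝ), (Gmu μ₂ z * ENNReal.ofReal (z ^ l) + Gmu μ₁ z * c)) := by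
    refine lintegral_mono_ae ?_
    filter_upwards [self_mem_ae_restrict measurableSet_Ioi] with z hz using hpt z hz
  rw [lintegral_add_right _ (hm2.mul_const c),
      lintegral_add_right _ (hm1.mul_const c)] at hint
  rw [lintegral_mul_const c hm2, lintegral_mul_const c hm1,
      Gmu_lintegral_eq_one μ₁ hsupp₁ hmean₁, Gmu_lintegral_eq_one μ₂ hsupp₂ hmean₂] at hint
  have hcfin : (1 : ℝ≥0∞) * c ≠ ⊤ := by simp [hc]
  exact (ENNReal.add_le_add_iff_right hcfin).mp hint

/-- **Inclusion of ambiguity sets from crossing tail bounds (Lemma 3.7(1)).** If there is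
`r₀ > 0` such that `G_{μ₁} ≥ G_{μ₂}` on `[0,r₀]` and `G_{μ₁} ≤ G_{μ₂}` on `(r₀,∞)`,
then `U^{μ₁}(P) ⊂ U^{μ₂}(P)`. -/
theorem Umu_inclusion_of_crossing (μ₁ μ₂ : Measure ℝ)
    [IsProbabilityMeasure μ₁] [IsProbabilityMeasure μ₂]
    (hsupp₁ : μ₁ (Set.Iio 0) = 0) (hsupp₂ : μ₂ (Set.Iio 0) = 0)
    (hmean₁ : (∫⁻ t, ENNReal.ofReal t ∂μ₁) = 1)
    (hmean₂ : (∫⁻ t, ENNReal.ofReal t ∂μ₂) = 1)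
    (hfin₁ : ∃ ε > (0 : ℝ), ∀ l : ℝ, 0 ≤ l → l < ε → Lmu μ₁ l ≠ ⊤ ∧ Lmu μ₁ l ≠ ⊥)
    (hfin₂ : ∃ ε > (0 : ℝ), ∀ l : ℝ, 0 ≤ l → l < ε → Lmu μ₂ l ≠ ⊤ ∧ Lmu μ₂ l ≠ ⊥)
    (r₀ : ℝ) (hr₀ : 0 < r₀)
    (h₁ : ∀ r : ℝ, 0 ≤ r → r ≤ r₀ → Gmu μ₂ r ≤ Gmu μ₁ r)
    (h₂ : ∀ r : ℝ, r₀ < r → Gmu μ₁ r ≤ Gmu μ₂ r)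
    (P : Measure Ω) [IsProbabilityMeasure P] :
    Umu μ₁ P ⊆ Umu μ₂ P := by
  intro Q hQ
  obtain ⟨hprob, hac, hcgf⟩ := hQ
  refine ⟨hprob, hac, fun l hl => (hcgf l hl).trans ?_⟩
  unfold Lmu
  rw [ENNReal.log_le_log_iff]
  exact mul_le_mul_right (key_ineq μ₁ μ₂ hsupp₁ hsupp₂ hmean₁ hmean₂ r₀ hr₀ h₁ h₂ l hl ) _
end

section
/- Let μ₁, μ₂ be probability measures on [0,∞) with mean 1, G_{μᵢ}(r) := μᵢ([r,∞)), Λ_{μᵢ}(λ) := log((λ+1)∫₀^∞ G_{μᵢ}(z) z^λ dz), each finite on a neighborhood of 0. Let I₂ := { λ > 0 : ∫₀^∞ G_{μ₂}(z) z^λ dz < ∞ }. If lim_{R→∞} R^λ ∫_R^∞ G_{μ₂}(z) dz = 0 for all λ ∈ I₂, and ∫₀^r G_{μ₂}(z) dz ≤ ∫₀^r G_{μ₁}(z) dz for all r ≥ 0, then for any probability measure P, U^{μ₁}(P) ⊂ U^{μ₂}(P). -/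
open MeasureTheory Real Set Filter
open scoped ENNReal Classical

variable {Ω : Type*} [MeasurableSpace Ω]

section AuxLemmas

lemma Gmu_measurable' (μ : Measure ℝ) : Measurable (Gmu μ) := by
  have h : Antitone (Gmu μ) := fun a b hab => measure_mono (Set.Ici_subset_Ici.mpr hab)
  exact h.measurable

/-- Layer-cake identity transforming `∫ G(z) z^l dz` into `l ∫ s^{l-1} (∫_{s}^∞ G) ds`. -/
lemma key_transform (μ : Measure ℝ) (l : ℝ) (hl : 0 < l) :
    (∫⁻ z in Set.Ioi (0:ℝ), Gmu μ z * ENNReal.ofReal (z ^ l)) =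
    ENNReal.ofReal l *
      ∫⁻ s in Set.Ioi (0:ℝ), (∫⁻ z in Set.Ioi s, Gmu μ z) * ENNReal.ofReal (s ^ (l-1)) := by
  set ν : Measure ℝ := (volume.restrict (Set.Ioi (0:ℝ))).withDensity (Gmu μ) with hν
  have hae : ∀ᵐ ω ∂ν, (0:ℝ) < ω := by
    refine (withDensity_absolutelyContinuous _ _).ae_le ?_
    exact ae_restrict_mem measurableSet_Ioi
  have f_nn : 0 ≤ᵐ[ν] (id : ℝ → ℝ) := hae.mono fun ω hω => le_of_lt hω
  have key := lintegral_rpow_eq_lintegral_meas_le_mul ν f_nn aemeasurable_id hl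
  have hLHS : (∫⁻ ω, ENNReal.ofReal ((id ω) ^ l) ∂ν)
      = ∫⁻ z in Set.Ioi (0:ℝ), Gmu μ z * ENNReal.ofReal (z ^ l) := by
    simp only [id_eq]
    rw [hν, lintegral_withDensity_eq_lintegral_mul _ (Gmu_measurable' μ)
      ((Real.continuous_rpow_const hl.le).measurable.ennreal_ofReal)]
    rfl
  have hRHS : ∀ s ∈ Set.Ioi (0:ℝ), ν {a : ℝ | s ≤ id a} = ∫⁻ z in Set.Ioi s, Gmu μ z := by
    intro s hs
    have h1 : {a : ℝ | s ≤ id a} = Set.Ici s := rfl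
    rw [h1, hν, withDensity_apply _ measurableSet_Ici,
      Measure.restrict_restrict measurableSet_Ici,
      show Set.Ici s ∩ Set.Ioi (0:ℝ) = Set.Ici s from
        Set.inter_eq_left.mpr (fun x hx => Set.mem_Ioi.mpr (lt_of_lt_of_le hs hx)),
      Measure.restrict_congr_set Ioi_ae_eq_Ici.symm]
  rw [hLHS] at key
  rw [key]
  congr 1
  exact setLIntegral_congr_fun measurableSet_Ioi
    (fun s hs => by rw [hRHS s hs])

/-- Total integral of the tail function equals the mean. -/
lemma Gmu_total (μ : Measure ℝ) (hsupp : μ (Set.Iio 0) = 0)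
    (hmean : (∫⁻ t, ENNReal.ofReal t ∂μ) = 1) :
    (∫⁻ z in Set.Ioi (0:ℝ), Gmu μ z) = 1 := by
  have f_nn : 0 ≤ᵐ[μ] (id : ℝ → ℝ) := by
    rw [Filter.EventuallyLE, ae_iff]
    simpa using (show μ {a : ℝ | a < 0} = 0 from hsupp)
  have key := lintegral_eq_lintegral_meas_le μ f_nn aemeasurable_id
  simp only [id_eq] at key
  rw [← hmean, key]
  rfl

end AuxLemmas

/-- **Inclusion of ambiguity sets from integrated tail comparison (Lemma 3.7(2)).** Let
`I₂ = {λ > 0 : ∫₀^∞ G_{μ₂}(z) z^λ dz < ∞}`. If `R^λ ∫_R^∞ G_{μ₂}(z) dz → 0` as `R → ∞`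
for all `λ ∈ I₂`, and `∫₀^r G_{μ₂}(z) dz ≤ ∫₀^r G_{μ₁}(z) dz` for all `r ≥ 0`, then
`U^{μ₁}(P) ⊂ U^{μ₂}(P)`. -/
theorem Umu_inclusion_of_integrated (μ₁ μ₂ : Measure ℝ)
    [IsProbabilityMeasure μ₁] [IsProbabilityMeasure μ₂]
    (hsupp₁ : μ₁ (Set.Iio 0) = 0) (hsupp₂ : μ₂ (Set.Iio 0) = 0)
    (hmean₁ : (∫⁻ t, ENNReal.ofReal t ∂μ₁) = 1)
    (hmean₂ : (∫⁻ t, ENNReal.ofReal t ∂μ₂) = 1)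
    (hfin₁ : ∃ ε > (0 : ℝ), ∀ l : ℝ, 0 ≤ l → l < ε → Lmu μ₁ l ≠ ⊤ ∧ Lmu μ₁ l ≠ ⊥)
    (hfin₂ : ∃ ε > (0 : ℝ), ∀ l : ℝ, 0 ≤ l → l < ε → Lmu μ₂ l ≠ ⊤ ∧ Lmu μ₂ l ≠ ⊥)
    (hdecay : ∀ l : ℝ, 0 < l →
      (∫⁻ z in Set.Ioi (0 : ℝ), Gmu μ₂ z * ENNReal.ofReal (z ^ l)) ≠ ⊤ →
      Tendsto (fun R : ℝ => ENNReal.ofReal (R ^ l) * ∫⁻ z in Set.Ioi R, Gmu μ₂ z)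
        atTop (nhds 0))
    (hcmp : ∀ r : ℝ, 0 ≤ r →
      (∫⁻ z in Set.Ioc (0 : ℝ) r, Gmu μ₂ z) ≤ ∫⁻ z in Set.Ioc (0 : ℝ) r, Gmu μ₁ z)
    (P : Measure Ω) [IsProbabilityMeasure P] :
    Umu μ₁ P ⊆ Umu μ₂ P := by
  intro Q hQ
  obtain ⟨hprob, hac, hcgf⟩ := hQ
  refine ⟨hprob, hac, fun l hl => (hcgf l hl).trans ?_⟩
  -- it suffices to compare the `Lmu`'s
  have htot₁ := Gmu_total μ₁ hsupp₁ hmean₁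
  have htot₂ := Gmu_total μ₂ hsupp₂ hmean₂
  have hT : ∀ s : ℝ, 0 < s →
      (∫⁻ z in Set.Ioi s, Gmu μ₁ z) ≤ ∫⁻ z in Set.Ioi s, Gmu μ₂ z := by
    intro s hs
    have hdecomp : ∀ μ : Measure ℝ, (∫⁻ z in Set.Ioc (0:ℝ) s, Gmu μ z)
        + (∫⁻ z in Set.Ioi s, Gmu μ z) = ∫⁻ z in Set.Ioi (0:ℝ), Gmu μ z := by
      intro μ
      rw [← lintegral_union measurableSet_Ioi (Set.Ioc_disjoint_Ioi le_rfl),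
        Set.Ioc_union_Ioi_eq_Ioi hs.le]
    have h1 := hdecomp μ₁
    have h2 := hdecomp μ₂
    rw [htot₁] at h1
    rw [htot₂] at h2
    have hne₁ : (∫⁻ z in Set.Ioc (0:ℝ) s, Gmu μ₁ z) ≠ ⊤ := by
      intro h
      simp [h] at h1
    have hne₂ : (∫⁻ z in Set.Ioc (0:ℝ) s, Gmu μ₂ z) ≠ ⊤ := by
      intro h
      simp [h] at h2
    have e1 : (∫⁻ z in Set.Ioi s, Gmu μ₁ z)
        = 1 - ∫⁻ z in Set.Ioc (0:ℝ) s, Gmu μ₁ z :=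
      ENNReal.eq_sub_of_add_eq hne₁ (by rw [add_comm]; exact h1)
    have e2 : (∫⁻ z in Set.Ioi s, Gmu μ₂ z)
        = 1 - ∫⁻ z in Set.Ioc (0:ℝ) s, Gmu μ₂ z :=
      ENNReal.eq_sub_of_add_eq hne₂ (by rw [add_comm]; exact h2)
    rw [e1, e2]
    exact tsub_le_tsub_left (hcmp s hs.le) 1
  have hI : (∫⁻ z in Set.Ioi (0:ℝ), Gmu μ₁ z * ENNReal.ofReal (z ^ l))
      ≤ ∫⁻ z in Set.Ioi (0:ℝ), Gmu μ₂ z * ENNReal.ofReal (z ^ l) := by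
    rw [key_transform μ₁ l hl, key_transform μ₂ l hl]
    refine mul_le_mul_right ?_ _
    refine lintegral_mono_ae ?_
    filter_upwards [ae_restrict_mem measurableSet_Ioi] with s hs
    exact mul_le_mul_left (hT s hs) _
  unfold Lmu
  exact ENNReal.log_le_log_iff.mpr (mul_le_mul_right hI _)
end

section
/- Let μ be a probability measure on [0,∞) with mean 1, G_μ(r) := μ([r,∞)), with Λ_μ(λ) := log((λ+1)∫₀^∞ G_μ(z) z^λ dz) finite on a neighborhood of 0, and let P, Q be probability measures with Q ≪ P. If there exists r₀ > 0 such that P(dQ/dP ≥ r) ≥ G_μ(r) for all r ∈ [0, r₀] and P(dQ/dP ≥ r) ≤ G_μ(r) for all r > r₀, then Q ∈ U^μ(P). -/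
open MeasureTheory Real Set Filter
open scoped ENNReal Classical

variable {Ω : Type*} [MeasurableSpace Ω]

/-- Pointwise rearrangement inequality used on `(0, r₀]`. -/
lemma ptwise_cross {x y u c : ℝ≥0∞} (hxy : y ≤ x) (hy : y ≠ ∞) (huc : u ≤ c) :
    x * u + c * y ≤ y * u + c * x := by
  obtain ⟨d, rfl⟩ : ∃ d, x = y + d := ⟨x - y, by rw [add_comm, tsub_add_cancel_of_le hxy]⟩
  have h : d * u ≤ d * c := mul_le_mul_right huc d
  calc (y + d) * u + c * y = (y * u + c * y) + d * u := by ring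
    _ ≤ (y * u + c * y) + d * c := add_le_add_right h _
    _ = y * u + c * (y + d) := by ring

/-- Pointwise rearrangement inequality used on `(r₀, ∞)`. -/
lemma ptwise_cross' {x y u c : ℝ≥0∞} (hxy : x ≤ y) (hx : x ≠ ∞) (hcu : c ≤ u) :
    x * u + c * y ≤ y * u + c * x := by
  obtain ⟨d, rfl⟩ : ∃ d, y = x + d := ⟨y - x, by rw [add_comm, tsub_add_cancel_of_le hxy]⟩
  have h : c * d ≤ u * d := mul_le_mul_left hcu d
  calc x * u + c * (x + d) = (x * u + c * x) + c * d := by ring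
    _ ≤ (x * u + c * x) + u * d := add_le_add_right h _
    _ = (x + d) * u + c * x := by ring

/-- Core crossing inequality in `ℝ≥0∞`. -/
lemma core_cross_ineq {l : ℝ} (hl : 0 < l) (GX Gm : ℝ → ℝ≥0∞)
    (hGXmeas : Measurable GX) (hGmmeas : Measurable Gm) (r₀ : ℝ) (hr₀ : 0 < r₀)
    (hGXm : ∀ z, GX z ≠ ∞) (hGmm : ∀ z, Gm z ≠ ∞)
    (hmX : ∫⁻ z in Set.Ioi (0:ℝ), GX z = 1)
    (hmM : ∫⁻ z in Set.Ioi (0:ℝ), Gm z = 1)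
    (hc₁ : ∀ z ∈ Set.Ioc (0:ℝ) r₀, Gm z ≤ GX z)
    (hc₂ : ∀ z ∈ Set.Ioi r₀, GX z ≤ Gm z) :
    ∫⁻ z in Set.Ioi (0:ℝ), GX z * ENNReal.ofReal (z ^ l)
      ≤ ∫⁻ z in Set.Ioi (0:ℝ), Gm z * ENNReal.ofReal (z ^ l) := by
  set c : ℝ≥0∞ := ENNReal.ofReal (r₀ ^ l) with hc
  have meas_pow : Measurable fun z : ℝ => ENNReal.ofReal (z ^ l) :=
    ENNReal.measurable_ofReal.comp (Real.continuous_rpow_const hl.le).measurable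
  have hsplit : ∀ g : ℝ → ℝ≥0∞, (∫⁻ z in Set.Ioi (0:ℝ), g z)
      = (∫⁻ z in Set.Ioc (0:ℝ) r₀, g z) + ∫⁻ z in Set.Ioi r₀, g z := by
    intro g
    rw [← Set.Ioc_union_Ioi_eq_Ioi hr₀.le,
      lintegral_union measurableSet_Ioi Set.Ioc_disjoint_Ioi_same]
  set A := ∫⁻ z in Set.Ioc (0:ℝ) r₀, GX z * ENNReal.ofReal (z ^ l) with hA
  set A' := ∫⁻ z in Set.Ioc (0:ℝ) r₀, Gm z * ENNReal.ofReal (z ^ l) with hA'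
  set B := ∫⁻ z in Set.Ioi r₀, GX z * ENNReal.ofReal (z ^ l) with hB
  set B' := ∫⁻ z in Set.Ioi r₀, Gm z * ENNReal.ofReal (z ^ l) with hB'
  set a := ∫⁻ z in Set.Ioc (0:ℝ) r₀, GX z with ha
  set a' := ∫⁻ z in Set.Ioc (0:ℝ) r₀, Gm z with ha'
  set b := ∫⁻ z in Set.Ioi r₀, GX z with hb
  set b' := ∫⁻ z in Set.Ioi r₀, Gm z with hb'
  have hab : a + b = 1 := by rw [ha, hb, ← hsplit, hmX]
  have hab' : a' + b' = 1 := by rw [ha', hb', ← hsplit, hmM]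
  have step1 : A + c * a' ≤ A' + c * a := by
    have e1 : A + c * a' = ∫⁻ z in Set.Ioc (0:ℝ) r₀,
        (GX z * ENNReal.ofReal (z ^ l) + c * Gm z) := by
      rw [lintegral_add_left (f := fun z => GX z * ENNReal.ofReal (z ^ l)) (hGXmeas.mul meas_pow),
        lintegral_const_mul' c _ ENNReal.ofReal_ne_top]
    have e2 : A' + c * a = ∫⁻ z in Set.Ioc (0:ℝ) r₀,
        (Gm z * ENNReal.ofReal (z ^ l) + c * GX z) := by
      rw [lintegral_add_left (f := fun z => Gm z * ENNReal.ofReal (z ^ l)) (hGmmeas.mul meas_pow),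
        lintegral_const_mul' c _ ENNReal.ofReal_ne_top]
    rw [e1, e2]
    refine setLIntegral_mono' measurableSet_Ioc fun z hz => ?_
    exact ptwise_cross (hc₁ z hz) (hGmm z)
      (ENNReal.ofReal_le_ofReal (Real.rpow_le_rpow hz.1.le hz.2 hl.le))
  have step2 : B + c * b' ≤ B' + c * b := by
    have e1 : B + c * b' = ∫⁻ z in Set.Ioi r₀,
        (GX z * ENNReal.ofReal (z ^ l) + c * Gm z) := by
      rw [lintegral_add_left (f := fun z => GX z * ENNReal.ofReal (z ^ l)) (hGXmeas.mul meas_pow),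
        lintegral_const_mul' c _ ENNReal.ofReal_ne_top]
    have e2 : B' + c * b = ∫⁻ z in Set.Ioi r₀,
        (Gm z * ENNReal.ofReal (z ^ l) + c * GX z) := by
      rw [lintegral_add_left (f := fun z => Gm z * ENNReal.ofReal (z ^ l)) (hGmmeas.mul meas_pow),
        lintegral_const_mul' c _ ENNReal.ofReal_ne_top]
    rw [e1, e2]
    refine setLIntegral_mono' measurableSet_Ioi fun z hz => ?_
    exact ptwise_cross' (hc₂ z hz) (hGXm z)
      (ENNReal.ofReal_le_ofReal (Real.rpow_le_rpow hr₀.le (le_of_lt hz) hl.le))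
  have key : (A + B) + c ≤ (A' + B') + c := by
    calc (A + B) + c = (A + B) + (c * a' + c * b') := by
          rw [← mul_add, hab', mul_one]
      _ = (A + c * a') + (B + c * b') := by ring
      _ ≤ (A' + c * a) + (B' + c * b) := add_le_add step1 step2
      _ = (A' + B') + (c * a + c * b) := by ring
      _ = (A' + B') + c := by rw [← mul_add, hab, mul_one]
  have hfin : c ≠ ∞ := ENNReal.ofReal_ne_top
  have main : A + B ≤ A' + B' := (ENNReal.add_le_add_iff_right hfin).mp key
  rw [hsplit fun z => GX z * ENNReal.ofReal (z ^ l),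
    hsplit fun z => Gm z * ENNReal.ofReal (z ^ l)]
  exact main

/-- **Membership criterion from crossing tail bounds (Theorem 3.9(1)).** If `Q ≪ P` and
there is `r₀ > 0` such that `P(dQ/dP ≥ r) ≥ G_μ(r)` for `r ∈ [0,r₀]` and
`P(dQ/dP ≥ r) ≤ G_μ(r)` for `r > r₀`, then `Q ∈ U^μ(P)`. -/
theorem mem_Umu_of_crossing (μ : Measure ℝ) [IsProbabilityMeasure μ]
    (hsupp : μ (Set.Iio 0) = 0)
    (hmean : (∫⁻ t, ENNReal.ofReal t ∂μ) = 1)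
    (hfin : ∃ ε > (0 : ℝ), ∀ l : ℝ, 0 ≤ l → l < ε → Lmu μ l ≠ ⊤ ∧ Lmu μ l ≠ ⊥)
    (P Q : Measure Ω) [IsProbabilityMeasure P] [IsProbabilityMeasure Q]
    (hQP : Q ≪ P) (r₀ : ℝ) (hr₀ : 0 < r₀)
    (h₁ : ∀ r : ℝ, 0 ≤ r → r ≤ r₀ → Gmu μ r ≤ tailG Q P r)
    (h₂ : ∀ r : ℝ, r₀ < r → tailG Q P r ≤ Gmu μ r) :
    Q ∈ Umu μ P := by
  refine ⟨inferInstance, hQP, fun l hl => ?_⟩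
  set d := Q.rnDeriv P with hd
  have hdm : Measurable d := Measure.measurable_rnDeriv Q P
  have hlt : ∀ᵐ x ∂P, d x < ∞ := Measure.rnDeriv_lt_top Q P
  set f : Ω → ℝ := fun x => (d x).toReal with hf
  have f_nn : 0 ≤ᵐ[P] f := .of_forall fun x => ENNReal.toReal_nonneg
  have f_mble : AEMeasurable f P := hdm.ennreal_toReal.aemeasurable
  have tail_eq : ∀ t : ℝ, P {x | t ≤ f x} = tailG Q P t := by
    intro t
    refine measure_congr (Filter.eventuallyEq_set.2 ?_)
    filter_upwards [hlt] with x hx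
    exact (ENNReal.ofReal_le_iff_le_toReal hx.ne).symm
  have hofd : ∀ᵐ x ∂P, ENNReal.ofReal (f x) = d x := by
    filter_upwards [hlt] with x hx
    exact ENNReal.ofReal_toReal hx.ne
  have meanX : (∫⁻ t in Set.Ioi (0:ℝ), tailG Q P t) = 1 := by
    have h1 := lintegral_eq_lintegral_meas_le P f_nn f_mble
    have h2 : ∫⁻ t in Set.Ioi (0:ℝ), P {a | t ≤ f a} = ∫⁻ t in Set.Ioi (0:ℝ), tailG Q P t :=
      lintegral_congr fun t => tail_eq t
    rw [← h2, ← h1, lintegral_congr_ae hofd, Measure.lintegral_rnDeriv hQP, measure_univ]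
  have id_nn : ∀ᵐ t ∂μ, (0:ℝ) ≤ t := by
    rw [ae_iff]
    convert hsupp using 2
    ext t
    simp [not_le]
  have meanM : (∫⁻ z in Set.Ioi (0:ℝ), Gmu μ z) = 1 := by
    have h1 := lintegral_eq_lintegral_meas_le μ (f := fun t => t) id_nn aemeasurable_id
    rw [hmean] at h1
    exact (lintegral_congr fun z => rfl).trans h1.symm
  have powid : (∫⁻ x, d x ^ l ∂Q)
      = ENNReal.ofReal (l + 1) * ∫⁻ t in Set.Ioi (0:ℝ), tailG Q P t * ENNReal.ofReal (t ^ l) := by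
    have m1 : Measurable fun x => d x ^ l :=
      ENNReal.continuous_rpow_const.measurable.comp hdm
    have e1 : (∫⁻ x, d x ^ l ∂Q) = ∫⁻ x, d x * d x ^ l ∂P :=
      (lintegral_rnDeriv_mul hQP m1.aemeasurable).symm
    have e2 : ∀ x, d x * d x ^ l = d x ^ (l + 1) := by
      intro x
      rw [ENNReal.rpow_add_of_nonneg l 1 hl.le zero_le_one, ENNReal.rpow_one, mul_comm]
    have e3 : (∫⁻ x, d x ^ (l + 1) ∂P) = ∫⁻ x, ENNReal.ofReal (f x ^ (l + 1)) ∂P := by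
      refine lintegral_congr_ae ?_
      filter_upwards [hlt] with x hx
      rw [show f x ^ (l + 1) = (d x ^ (l + 1)).toReal from ENNReal.toReal_rpow _ _,
        ENNReal.ofReal_toReal (ENNReal.rpow_ne_top_of_nonneg (by linarith) hx.ne)]
    have e4 := lintegral_rpow_eq_lintegral_meas_le_mul P f_nn f_mble (p := l + 1) (by linarith)
    rw [e1, lintegral_congr fun x => e2 x, e3, e4]
    congr 1
    refine lintegral_congr fun t => ?_
    rw [tail_eq t, add_sub_cancel_right]
  have hGXmeas : Measurable (tailG Q P) := by
    have hanti : Antitone (tailG Q P) := fun r s hrs =>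
      measure_mono fun x hx => le_trans (ENNReal.ofReal_le_ofReal hrs) hx
    exact hanti.measurable
  have hGmmeas : Measurable (Gmu μ) := by
    have hanti : Antitone (Gmu μ) := fun r s hrs =>
      measure_mono (Set.Ici_subset_Ici.2 hrs)
    exact hanti.measurable
  have core := core_cross_ineq hl (tailG Q P) (Gmu μ) hGXmeas hGmmeas r₀ hr₀
    (fun z => measure_ne_top P _) (fun z => measure_ne_top μ _) meanX meanM
    (fun z hz => h₁ z hz.1.le hz.2) (fun z hz => h₂ z hz)
  show cgfLLR Q P l ≤ Lmu μ l
  rw [cgfLLR, Lmu]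
  rw [← hd, powid]
  exact ENNReal.log_monotone (mul_le_mul_right core _)
end

section
/- Let μ be a probability measure on [0,∞) with mean 1 whose associated Λ_μ is finite on a neighborhood of 0, let P be a probability measure, and let Q₀ ∈ U^μ(P) and Q be a probability measure with Q ≪ P. If there exists r₀ > 0 such that, P-a.s., r₀ · 1_{dQ₀/dP ≤ r₀} ≥ (dQ/dP) · 1_{dQ₀/dP ≤ r₀} ≥ (dQ₀/dP) · 1_{dQ₀/dP ≤ r₀} and r₀ · 1_{dQ₀/dP ≥ r₀} ≤ (dQ/dP) · 1_{dQ₀/dP ≥ r₀} ≤ (dQ₀/dP) · 1_{dQ₀/dP ≥ r₀}, then Q ∈ U^μ(P). -/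
open MeasureTheory Real Set Filter
open scoped ENNReal Classical

variable {Ω : Type*} [MeasurableSpace Ω]

-- auxiliary lemmas

lemma grad_ineq {F A p : ℝ} (hF : 0 < F) (hA : 0 ≤ A) (hp : 1 ≤ p) :
    F ^ p + p * F ^ (p - 1) * (A - F) ≤ A ^ p := by
  have hs : (-1 : ℝ) ≤ A / F - 1 := by
    have : 0 ≤ A / F := div_nonneg hA hF.le
    linarith
  have hb := one_add_mul_self_le_rpow_one_add hs hp
  have h1 : 1 + (A / F - 1) = A / F := by ring
  rw [h1] at hb
  have hb2 : F ^ p * (1 + p * (A / F - 1)) ≤ F ^ p * (A / F) ^ p :=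
    mul_le_mul_of_nonneg_left hb (Real.rpow_nonneg hF.le p)
  have hFp : (0:ℝ) < F ^ p := Real.rpow_pos_of_pos hF p
  have key : F ^ p * (A / F) ^ p = A ^ p := by
    rw [Real.div_rpow hA hF.le]
    field_simp
  have key2 : F ^ p * (1 + p * (A / F - 1)) = F ^ p + p * F ^ (p - 1) * (A - F) := by
    have h3 : F ^ (p - 1) = F ^ p / F := Real.rpow_sub_one hF.ne' p
    rw [h3]
    field_simp
  rw [key, key2] at hb2
  exact hb2

lemma key_real {F A r₀ p : ℝ} (hA : 0 ≤ A) (hr : 0 < r₀) (hp : 1 ≤ p)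
    (h : (A ≤ F ∧ F ≤ r₀) ∨ (r₀ ≤ F ∧ F ≤ A)) :
    F ^ p + p * r₀ ^ (p - 1) * A ≤ A ^ p + p * r₀ ^ (p - 1) * F := by
  have hp0 : (0:ℝ) < p := by linarith
  rcases eq_or_lt_of_le (show (0:ℝ) ≤ F by
    rcases h with ⟨h1, _⟩ | ⟨h1, _⟩
    · exact le_trans hA h1
    · exact le_trans hr.le h1) with hF0 | hF0
  · -- F = 0
    rcases h with ⟨h1, _⟩ | ⟨h1, _⟩
    · have : A = 0 := le_antisymm (by linarith) hA
      simp [this, ← hF0]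
    · linarith
  have hg := grad_ineq hF0 hA hp
  -- F^p - A^p ≤ p F^(p-1) (F - A)
  have hmono : ∀ x y : ℝ, 0 < x → x ≤ y → x ^ (p-1) ≤ y ^ (p-1) := fun x y hx hxy =>
    Real.rpow_le_rpow hx.le hxy (by linarith)
  rcases h with ⟨h1, h2⟩ | ⟨h1, h2⟩
  · have hc : p * F ^ (p-1) ≤ p * r₀ ^ (p-1) :=
      mul_le_mul_of_nonneg_left (hmono F r₀ hF0 h2) hp0.le
    nlinarith [Real.rpow_nonneg (le_trans hA h1) p]
  · have hc : p * r₀ ^ (p-1) ≤ p * F ^ (p-1) :=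
      mul_le_mul_of_nonneg_left (hmono r₀ F hr h1) hp0.le
    nlinarith

lemma key_ennreal {f a : ℝ≥0∞} {r₀ p : ℝ} (hr : 0 < r₀) (hp : 1 ≤ p)
    (h : (a ≤ f ∧ f ≤ ENNReal.ofReal r₀) ∨ (ENNReal.ofReal r₀ ≤ f ∧ f ≤ a)) :
    f ^ p + ENNReal.ofReal (p * r₀ ^ (p - 1)) * a
      ≤ a ^ p + ENNReal.ofReal (p * r₀ ^ (p - 1)) * f := by
  rcases eq_or_ne a ⊤ with rfl | ha
  · rw [ENNReal.top_rpow_of_pos (by linarith : (0:ℝ) < p)]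
    exact le_top.trans_eq (by simp)
  have hf : f ≠ ⊤ := by
    rcases h with ⟨_, h2⟩ | ⟨_, h2⟩
    · exact (lt_of_le_of_lt h2 ENNReal.ofReal_lt_top).ne
    · exact (lt_of_le_of_lt h2 (lt_top_iff_ne_top.mpr ha)).ne
  have hKey := key_real (F := f.toReal) (A := a.toReal) (r₀ := r₀) (p := p)
    ENNReal.toReal_nonneg hr hp ?_
  · have conv : ∀ x y : ℝ≥0∞, x ≠ ⊤ → y ≠ ⊤ →
        ENNReal.ofReal (x.toReal ^ p + p * r₀ ^ (p-1) * y.toReal)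
          = x ^ p + ENNReal.ofReal (p * r₀ ^ (p - 1)) * y := by
      intro x y hx hy
      rw [ENNReal.ofReal_add (Real.rpow_nonneg ENNReal.toReal_nonneg p) (by positivity),
        ENNReal.toReal_rpow,
        ENNReal.ofReal_toReal (ENNReal.rpow_ne_top_of_nonneg (by linarith) hx),
        ENNReal.ofReal_mul (by positivity : (0:ℝ) ≤ p * r₀ ^ (p-1)),
        ENNReal.ofReal_toReal hy]
    rw [← conv f a hf ha, ← conv a f ha hf]
    exact ENNReal.ofReal_le_ofReal hKey
  · rcases h with ⟨h1, h2⟩ | ⟨h1, h2⟩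
    · left
      constructor
      · exact ENNReal.toReal_le_toReal ha hf |>.mpr h1
      · have := ENNReal.toReal_le_toReal hf ENNReal.ofReal_lt_top.ne |>.mpr h2
        rwa [ENNReal.toReal_ofReal hr.le] at this
    · right
      constructor
      · have := ENNReal.toReal_le_toReal ENNReal.ofReal_lt_top.ne hf |>.mpr h1
        rwa [ENNReal.toReal_ofReal hr.le] at this
      · exact ENNReal.toReal_le_toReal hf ha |>.mpr h2


lemma cgf_rewrite {Ω : Type*} [MeasurableSpace Ω] (ν P : Measure Ω) [IsFiniteMeasure ν] [SigmaFinite P]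
    (hνP : ν ≪ P) {l : ℝ} (hl : 0 < l) :
    ∫⁻ x, (ν.rnDeriv P x) ^ l ∂ν = ∫⁻ x, (ν.rnDeriv P x) ^ (l + 1) ∂P := by
  have hm : AEMeasurable (fun x => ν.rnDeriv P x ^ l) P := by
    exact (ENNReal.continuous_rpow_const.measurable.comp (Measure.measurable_rnDeriv ν P)).aemeasurable
  rw [← lintegral_rnDeriv_mul hνP hm]
  refine lintegral_congr fun x => ?_
  rw [add_comm, ENNReal.rpow_add_of_nonneg 1 l zero_le_one hl.le, ENNReal.rpow_one]

/-- **Membership criterion by comparison with a known member (Theorem 3.9(2)).** Let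
`Q₀ ∈ U^μ(P)` and `Q ≪ P`. If there is `r₀ > 0` such that, `P`-a.s., on
`{dQ₀/dP ≤ r₀}` we have `dQ₀/dP ≤ dQ/dP ≤ r₀`, and on `{dQ₀/dP ≥ r₀}` we have
`r₀ ≤ dQ/dP ≤ dQ₀/dP`, then `Q ∈ U^μ(P)`. -/
theorem mem_Umu_of_squeeze (μ : Measure ℝ) [IsProbabilityMeasure μ]
    (hsupp : μ (Set.Iio 0) = 0)
    (hmean : (∫⁻ t, ENNReal.ofReal t ∂μ) = 1)
    (hfin : ∃ ε > (0 : ℝ), ∀ l : ℝ, 0 ≤ l → l < ε → Lmu μ l ≠ ⊤ ∧ Lmu μ l ≠ ⊥)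
    (P Q₀ Q : Measure Ω) [IsProbabilityMeasure P] [IsProbabilityMeasure Q]
    (hQ₀ : Q₀ ∈ Umu μ P) (hQP : Q ≪ P) (r₀ : ℝ) (hr₀ : 0 < r₀)
    (hae : ∀ᵐ x ∂P,
      (Q₀.rnDeriv P x ≤ ENNReal.ofReal r₀ →
        Q₀.rnDeriv P x ≤ Q.rnDeriv P x ∧ Q.rnDeriv P x ≤ ENNReal.ofReal r₀) ∧
      (ENNReal.ofReal r₀ ≤ Q₀.rnDeriv P x →
        ENNReal.ofReal r₀ ≤ Q.rnDeriv P x ∧ Q.rnDeriv P x ≤ Q₀.rnDeriv P x)) :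
    Q ∈ Umu μ P := by
  obtain ⟨hQ₀prob, hQ₀P, hQ₀cgf⟩ := hQ₀
  refine ⟨inferInstance, hQP, fun l hl => ?_⟩
  set f := Q.rnDeriv P with hf
  set a := Q₀.rnDeriv P with ha
  set p := l + 1 with hp_def
  have hp : (1:ℝ) ≤ p := by simp [hp_def]; linarith
  set K := ENNReal.ofReal (p * r₀ ^ (p - 1)) with hK
  have hpt : ∀ᵐ x ∂P, f x ^ p + K * a x ≤ a x ^ p + K * f x := by
    filter_upwards [hae] with x hx
    refine key_ennreal hr₀ hp ?_
    rcases le_total (a x) (ENNReal.ofReal r₀) with h | h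
    · exact Or.inl (hx.1 h)
    · exact Or.inr (hx.2 h)
  have hmf : Measurable f := Measure.measurable_rnDeriv Q P
  have hma : Measurable a := Measure.measurable_rnDeriv Q₀ P
  have hmfp : Measurable fun x => f x ^ p :=
    ENNReal.continuous_rpow_const.measurable.comp hmf
  have hmap : Measurable fun x => a x ^ p :=
    ENNReal.continuous_rpow_const.measurable.comp hma
  have hint := lintegral_mono_ae hpt
  rw [lintegral_add_left hmfp, lintegral_add_left hmap,
    lintegral_const_mul K hma, lintegral_const_mul K hmf,
    Measure.lintegral_rnDeriv hQP, Measure.lintegral_rnDeriv hQ₀P,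
    measure_univ, measure_univ] at hint
  simp only [mul_one] at hint
  have hcomp : ∫⁻ x, f x ^ p ∂P ≤ ∫⁻ x, a x ^ p ∂P :=
    (ENNReal.add_le_add_iff_right ENNReal.ofReal_ne_top).mp hint
  have h1 : cgfLLR Q P l = ENNReal.log (∫⁻ x, f x ^ p ∂P) := by
    rw [cgfLLR, cgf_rewrite Q P hQP hl]
  have h2 : cgfLLR Q₀ P l = ENNReal.log (∫⁻ x, a x ^ p ∂P) := by
    rw [cgfLLR, cgf_rewrite Q₀ P hQ₀P hl]
  calc cgfLLR Q P l = ENNReal.log (∫⁻ x, f x ^ p ∂P) := h1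
    _ ≤ ENNReal.log (∫⁻ x, a x ^ p ∂P) := ENNReal.log_monotone hcomp
    _ = cgfLLR Q₀ P l := h2.symm
    _ ≤ Lmu μ l := hQ₀cgf l hl
end

section
/- Let P be a probability measure on (Ω, M), τ : Ω → [0,∞] measurable, and γ > 0 with 0 < E_P[τ^γ] < ∞. Define dQ_γ := τ^γ dP / E_P[τ^γ] and, for β ∈ ℝ and I ⊂ ℝ, U^γ_β(P) := { Q : R_β(Q‖P) ≤ R_β(Q_γ‖P) } and U_I^γ(P) := { Q : R_α(Q‖P) ≤ R_α(Q_γ‖P) for all α ∈ I }. Then Q_γ ∈ U_I^γ(P) ⊂ U^γ_β(P) for any β ∈ I, and sup_{Q ∈ U^γ_{(1,∞)}(P)} log ∫ τ dQ = sup_{Q ∈ U^γ_{1+γ⁻¹}(P)} log ∫ τ dQ = log ∫ τ dQ_γ = inf_{c>1} { c⁻¹ log ∫ τ^c dP + (c−1)⁻¹ R_{c/(c−1)}(Q_γ‖P) }, with the infimum achieved at c = γ + 1. -/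
open MeasureTheory Real Set Filter
open scoped ENNReal Classical

variable {Ω : Type*} [MeasurableSpace Ω]

/-- The tilted measure `dQ_γ = τ^γ dP / E_P[τ^γ]`. -/
noncomputable def tiltedMeasure (P : Measure Ω) (τ : Ω → ℝ≥0∞) (γ : ℝ) : Measure Ω :=
  (∫⁻ x, τ x ^ γ ∂P)⁻¹ • P.withDensity (fun x => τ x ^ γ)

/-- The ambiguity set `U^γ_β(P) = {Q : R_β(Q‖P) ≤ R_β(Q_γ‖P)}`. -/
def Ubeta (P Qg : Measure Ω) (β : ℝ) : Set (Measure Ω) :=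
  {Q | IsProbabilityMeasure Q ∧ renyiDiv β Q P ≤ renyiDiv β Qg P}

/-- The ambiguity set `U_I^γ(P) = {Q : R_α(Q‖P) ≤ R_α(Q_γ‖P) for all α ∈ I}`. -/
def UIdx (P Qg : Measure Ω) (I : Set ℝ) : Set (Measure Ω) :=
  {Q | IsProbabilityMeasure Q ∧ ∀ α ∈ I, renyiDiv α Q P ≤ renyiDiv α Qg P}

/- ### Auxiliary lemmas -/

lemma ereal_coe_mul_assoc (r s : ℝ) (x : EReal) :
    (r : EReal) * ((s : EReal) * x) = ((r * s : ℝ) : EReal) * x := by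
  rw [← mul_assoc, ← EReal.coe_mul]

lemma ereal_mul_le_cancel {r : ℝ} (hr : 0 < r) {x y : EReal}
    (h : (r : EReal) * x ≤ (r : EReal) * y) : x ≤ y := by
  have h2 := mul_le_mul_of_nonneg_left h
    (show (0 : EReal) ≤ ((r⁻¹ : ℝ) : EReal) by exact_mod_cast (inv_pos.2 hr).le)
  rwa [ereal_coe_mul_assoc, ereal_coe_mul_assoc, inv_mul_cancel₀ hr.ne', EReal.coe_one,
    one_mul, one_mul] at h2

lemma ennreal_log_eq {x : ℝ≥0∞} (h0 : x ≠ 0) (ht : x ≠ ⊤) :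
    ENNReal.log x = ((Real.log x.toReal : ℝ) : EReal) :=
  ENNReal.log_pos_real h0 ht

/-- The key integral identity: for `Q ≪ P`, the defining integral of the Rényi divergence
equals `∫ (dQ/dP)^α dP`. -/
lemma aux_int {Q P : Measure Ω} [IsFiniteMeasure P] [IsFiniteMeasure Q] (hQP : Q ≪ P)
    {α : ℝ} (hα : 0 < α) :
    (∫⁻ x in {x | 0 < P.rnDeriv (P + Q) x},
      (Q.rnDeriv (P + Q) x) ^ α * (P.rnDeriv (P + Q) x) ^ (1 - α) ∂(P + Q))
      = ∫⁻ x, (Q.rnDeriv P x) ^ α ∂P := by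
  have hPν : P ≪ P + Q := Measure.absolutelyContinuous_of_le (Measure.le_add_right le_rfl)
  have hp : Measurable (P.rnDeriv (P + Q)) := Measure.measurable_rnDeriv _ _
  have hd : Measurable (Q.rnDeriv P) := Measure.measurable_rnDeriv _ _
  have hS : MeasurableSet {x | 0 < P.rnDeriv (P + Q) x} :=
    measurableSet_lt measurable_const hp
  have step1 : (∫⁻ x in {x | 0 < P.rnDeriv (P + Q) x},
      (Q.rnDeriv (P + Q) x) ^ α * (P.rnDeriv (P + Q) x) ^ (1 - α) ∂(P + Q))
      = ∫⁻ x in {x | 0 < P.rnDeriv (P + Q) x},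
        (Q.rnDeriv P x) ^ α * P.rnDeriv (P + Q) x ∂(P + Q) := by
    refine lintegral_congr_ae ((ae_restrict_iff' hS).2 ?_)
    filter_upwards [Measure.rnDeriv_mul_rnDeriv (κ := P + Q) hQP,
      Measure.rnDeriv_lt_top P (P + Q)] with x h1 h2 hxS
    have hlt : 0 < P.rnDeriv (P + Q) x := hxS
    have hp0 : P.rnDeriv (P + Q) x ≠ 0 := hlt.ne'
    have hpt : P.rnDeriv (P + Q) x ≠ ⊤ := h2.ne
    rw [← h1, Pi.mul_apply, ENNReal.mul_rpow_of_nonneg _ _ hα.le, mul_assoc,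
      ← ENNReal.rpow_add _ _ hp0 hpt, show α + (1 - α) = 1 by ring, ENNReal.rpow_one]
  have hzero : (∫⁻ x in {x | 0 < P.rnDeriv (P + Q) x}ᶜ,
      (Q.rnDeriv P x) ^ α * P.rnDeriv (P + Q) x ∂(P + Q)) = 0 := by
    have hae : ∀ᵐ x ∂(P + Q), x ∈ {x | 0 < P.rnDeriv (P + Q) x}ᶜ →
        (Q.rnDeriv P x) ^ α * P.rnDeriv (P + Q) x = (0 : ℝ≥0∞) :=
      ae_of_all _ fun x hx => by
        have h0 : P.rnDeriv (P + Q) x = 0 := by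
          have := (Set.mem_compl_iff _ _).1 hx
          simpa using nonpos_iff_eq_zero.1 (not_lt.1 this)
        simp [h0]
    rw [setLIntegral_congr_fun_ae hS.compl hae, lintegral_zero]
  have step2 : (∫⁻ x, (Q.rnDeriv P x) ^ α * P.rnDeriv (P + Q) x ∂(P + Q))
      = ∫⁻ x in {x | 0 < P.rnDeriv (P + Q) x},
        (Q.rnDeriv P x) ^ α * P.rnDeriv (P + Q) x ∂(P + Q) := by
    rw [← lintegral_add_compl (μ := P + Q)
      (fun x => (Q.rnDeriv P x) ^ α * P.rnDeriv (P + Q) x) hS, hzero, add_zero]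
  have step3 : (∫⁻ x, (Q.rnDeriv P x) ^ α * P.rnDeriv (P + Q) x ∂(P + Q))
      = ∫⁻ x, (Q.rnDeriv P x) ^ α ∂P := by
    rw [show (∫⁻ x, (Q.rnDeriv P x) ^ α * P.rnDeriv (P + Q) x ∂(P + Q))
        = ∫⁻ a, ((P.rnDeriv (P + Q)) * fun a => (Q.rnDeriv P a) ^ α) a ∂(P + Q) from
        lintegral_congr fun x => by simp [mul_comm],
      ← lintegral_withDensity_eq_lintegral_mul (P + Q) hp (hd.pow_const α),
      Measure.withDensity_rnDeriv_eq P (P + Q) hPν]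
  rw [step1, ← step2, step3]

/-- Formula for the Rényi divergence of order `α > 1` when `Q ≪ P`. -/
lemma renyiDiv_eq {Q P : Measure Ω} [IsFiniteMeasure P] [IsFiniteMeasure Q] (hQP : Q ≪ P)
    {α : ℝ} (hα : 1 < α) :
    renyiDiv α Q P
      = (((α * (α - 1))⁻¹ : ℝ) : EReal) * ENNReal.log (∫⁻ x, (Q.rnDeriv P x) ^ α ∂P) := by
  rw [renyiDiv, if_neg (not_lt.2 (by linarith)), renyiDivAux,
    if_neg (fun h => h.2 hQP), aux_int hQP (by linarith)]

/-- **Tightness over ambiguity sets, positive order (Theorem 7.2(1)).** For `γ > 0` with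
`0 < E_P[τ^γ] < ∞` and `Q_γ = τ^γ dP / E_P[τ^γ]`: `Q_γ ∈ U_I^γ(P) ⊂ U^γ_β(P)` for any
`β ∈ I`, and
`sup_{Q ∈ U^γ_{(1,∞)}} log ∫ τ dQ = sup_{Q ∈ U^γ_{1+γ⁻¹}} log ∫ τ dQ = log ∫ τ dQ_γ
 = inf_{c>1} { c⁻¹ log ∫ τ^c dP + (c-1)⁻¹ R_{c/(c-1)}(Q_γ‖P) }`,
with the infimum achieved at `c = γ + 1`. -/
theorem tightness_positive_order (P : Measure Ω) [IsProbabilityMeasure P]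
    (τ : Ω → ℝ≥0∞) (hτ : Measurable τ) (γ : ℝ) (hγ : 0 < γ)
    (hpos : 0 < ∫⁻ x, τ x ^ γ ∂P) (hfin : (∫⁻ x, τ x ^ γ ∂P) ≠ ⊤) :
    (∀ I : Set ℝ,
      tiltedMeasure P τ γ ∈ UIdx P (tiltedMeasure P τ γ) I ∧
      ∀ β ∈ I, UIdx P (tiltedMeasure P τ γ) I ⊆ Ubeta P (tiltedMeasure P τ γ) β) ∧
    (⨆ Q ∈ UIdx P (tiltedMeasure P τ γ) (Set.Ioi (1 : ℝ)),
        ENNReal.log (∫⁻ x, τ x ∂Q)) =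
      ENNReal.log (∫⁻ x, τ x ∂(tiltedMeasure P τ γ)) ∧
    (⨆ Q ∈ Ubeta P (tiltedMeasure P τ γ) (1 + γ⁻¹),
        ENNReal.log (∫⁻ x, τ x ∂Q)) =
      ENNReal.log (∫⁻ x, τ x ∂(tiltedMeasure P τ γ)) ∧
    ENNReal.log (∫⁻ x, τ x ∂(tiltedMeasure P τ γ)) =
      (⨅ c ∈ Set.Ioi (1 : ℝ),
        ((c⁻¹ : ℝ) : EReal) * ENNReal.log (∫⁻ x, τ x ^ c ∂P)
          + (((c - 1)⁻¹ : ℝ) : EReal) *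
              renyiDiv (c / (c - 1)) (tiltedMeasure P τ γ) P) ∧
    (⨅ c ∈ Set.Ioi (1 : ℝ),
        ((c⁻¹ : ℝ) : EReal) * ENNReal.log (∫⁻ x, τ x ^ c ∂P)
          + (((c - 1)⁻¹ : ℝ) : EReal) *
              renyiDiv (c / (c - 1)) (tiltedMeasure P τ γ) P) =
      (((γ + 1)⁻¹ : ℝ) : EReal) * ENNReal.log (∫⁻ x, τ x ^ (γ + 1) ∂P)
        + ((((γ + 1) - 1)⁻¹ : ℝ) : EReal) *
            renyiDiv ((γ + 1) / ((γ + 1) - 1)) (tiltedMeasure P τ γ) P := by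
  classical
  set f : Ω → ℝ≥0∞ := fun x => τ x ^ γ with hf_def
  have hf : Measurable f := hτ.pow_const _
  set m : ℝ≥0∞ := ∫⁻ x, τ x ^ γ ∂P with hm_def
  have hm0 : m ≠ 0 := hpos.ne'
  have hmT : m ≠ ⊤ := hfin
  set Qg : Measure Ω := tiltedMeasure P τ γ with hQg_def
  have hQg_eq : Qg = m⁻¹ • P.withDensity f := rfl
  haveI : IsFiniteMeasure (P.withDensity f) := isFiniteMeasure_withDensity hfin
  have hprob : IsProbabilityMeasure Qg := by
    constructor
    rw [hQg_eq]
    simp only [Measure.smul_apply, smul_eq_mul]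
    rw [withDensity_apply _ MeasurableSet.univ, setLIntegral_univ, ← hm_def]
    exact ENNReal.inv_mul_cancel hm0 hmT
  haveI := hprob
  have hQgP : Qg ≪ P := (withDensity_absolutelyContinuous P f).smul_left _
  have hrn : Qg.rnDeriv P =ᵐ[P] fun x => m⁻¹ * f x := by
    filter_upwards [Measure.rnDeriv_smul_left_of_ne_top (P.withDensity f) P
      (ENNReal.inv_ne_top.2 hm0), Measure.rnDeriv_withDensity P hf] with x hx1 hx2
    rw [hQg_eq, hx1]
    simp [hx2]
  have hpow : ∀ b : ℝ, 0 ≤ b → (∫⁻ x, (Qg.rnDeriv P x) ^ b ∂P)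
      = (m ^ b)⁻¹ * ∫⁻ x, τ x ^ (γ * b) ∂P := by
    intro b hb
    have h1 : (∫⁻ x, (Qg.rnDeriv P x) ^ b ∂P)
        = ∫⁻ x, (m ^ b)⁻¹ * τ x ^ (γ * b) ∂P := by
      refine lintegral_congr_ae ?_
      filter_upwards [hrn] with x hx
      rw [hx, ENNReal.mul_rpow_of_nonneg _ _ hb, ← ENNReal.inv_rpow, ENNReal.rpow_mul]
    rw [h1, lintegral_const_mul _ (hτ.pow_const _)]
  have hInt_ne_zero : ∀ b : ℝ, 0 < b → (∫⁻ x, τ x ^ b ∂P) ≠ 0 := by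
    intro b hb h0
    apply hm0
    rw [lintegral_eq_zero_iff (hτ.pow_const _)] at h0
    rw [hm_def, lintegral_eq_zero_iff (hτ.pow_const _)]
    filter_upwards [h0] with x hx
    have hx0 : τ x = 0 := by
      rcases ENNReal.rpow_eq_zero_iff.1 hx with ⟨h, _⟩ | ⟨_, h⟩
      · exact h
      · linarith
    simp only [hx0]
    exact ENNReal.zero_rpow_of_pos hγ
  set T : ℝ≥0∞ := ∫⁻ x, τ x ^ (γ + 1) ∂P with hT_def
  have hT0 : T ≠ 0 := hInt_ne_zero _ (by linarith)
  have hτQg : (∫⁻ x, τ x ∂Qg) = m⁻¹ * T := by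
    rw [hQg_eq, lintegral_smul_measure, lintegral_withDensity_eq_lintegral_mul _ hf hτ]
    congr 1
    refine lintegral_congr fun x => ?_
    show τ x ^ γ * τ x = τ x ^ (γ + 1)
    rw [ENNReal.rpow_add_of_nonneg _ _ hγ.le zero_le_one, ENNReal.rpow_one]
  have hconj : ∀ c : ℝ, 1 < c → Real.HolderConjugate c (c / (c - 1)) := by
    intro c hc
    refine Real.holderConjugate_iff.2 ⟨hc, ?_⟩
    have hc0 : c ≠ 0 := by linarith
    have hc1 : c - 1 ≠ 0 := by linarith
    rw [inv_div]
    field_simp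
    ring
  have holder : ∀ c : ℝ, 1 < c → ∀ g : Ω → ℝ≥0∞, Measurable g →
      (∫⁻ x, τ x * g x ∂P) ≤ (∫⁻ x, τ x ^ c ∂P) ^ c⁻¹
        * (∫⁻ x, g x ^ (c / (c - 1)) ∂P) ^ (c / (c - 1))⁻¹ := by
    intro c hc g hg
    have h := ENNReal.lintegral_mul_le_Lp_mul_Lq P (hconj c hc)
      hτ.aemeasurable hg.aemeasurable
    simpa [one_div] using h
  have hRg : ∀ β : ℝ, 1 < β → renyiDiv β Qg P
      = (((β * (β - 1))⁻¹ : ℝ) : EReal)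
        * ENNReal.log ((m ^ β)⁻¹ * ∫⁻ x, τ x ^ (γ * β) ∂P) := by
    intro β hβ
    rw [renyiDiv_eq hQgP hβ, hpow β (by linarith)]
  -- the key inequality `V ≤ F c` for all `c > 1`
  have key_le : ∀ c : ℝ, 1 < c →
      ENNReal.log (m⁻¹ * T) ≤ ((c⁻¹ : ℝ) : EReal) * ENNReal.log (∫⁻ x, τ x ^ c ∂P)
        + (((c - 1)⁻¹ : ℝ) : EReal) * renyiDiv (c / (c - 1)) Qg P := by
    intro c hc
    have hc1 : (0 : ℝ) < c - 1 := by linarith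
    set β : ℝ := c / (c - 1) with hβ_def
    have hβ1 : 1 < β := by
      rw [hβ_def, lt_div_iff₀ hc1]; linarith
    have hβ0 : β ≠ 0 := by positivity
    rw [hRg β hβ1, ereal_coe_mul_assoc]
    have hco : (c - 1)⁻¹ * (β * (β - 1))⁻¹ = β⁻¹ := by
      rw [hβ_def]
      field_simp
      ring
    rw [hco]
    set A : ℝ≥0∞ := ∫⁻ x, τ x ^ c ∂P with hA_def
    set B : ℝ≥0∞ := ∫⁻ x, τ x ^ (γ * β) ∂P with hB_def
    rw [show ((c⁻¹ : ℝ) : EReal) * ENNReal.log A = ENNReal.log (A ^ c⁻¹) from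
        ENNReal.log_rpow.symm,
      show ((β⁻¹ : ℝ) : EReal) * ENNReal.log ((m ^ β)⁻¹ * B)
          = ENNReal.log (((m ^ β)⁻¹ * B) ^ β⁻¹) from ENNReal.log_rpow.symm,
      ← ENNReal.log_mul_add]
    apply ENNReal.log_monotone
    have hmulβ : ((m ^ β)⁻¹ * B) ^ β⁻¹ = m⁻¹ * B ^ β⁻¹ := by
      rw [ENNReal.mul_rpow_of_nonneg _ _ (by positivity), ← ENNReal.inv_rpow,
        ← ENNReal.rpow_mul, mul_inv_cancel₀ hβ0, ENNReal.rpow_one]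
    rw [hmulβ]
    have hH : T ≤ A ^ c⁻¹ * B ^ β⁻¹ := by
      have h := holder c hc (fun x => τ x ^ γ) (hτ.pow_const _)
      have hTi : (∫⁻ x, τ x * τ x ^ γ ∂P) = T := by
        refine lintegral_congr fun x => ?_
        rw [show τ x * τ x ^ γ = τ x ^ (1 : ℝ) * τ x ^ γ by rw [ENNReal.rpow_one],
          ← ENNReal.rpow_add_of_nonneg _ _ zero_le_one hγ.le, add_comm]
      have hBi : (∫⁻ x, (τ x ^ γ) ^ (c / (c - 1)) ∂P) = B := by
        rw [hB_def]
        exact lintegral_congr fun x => by rw [← ENNReal.rpow_mul, hβ_def]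
      rw [hTi, hBi, ← hβ_def] at h
      exact h
    calc m⁻¹ * T ≤ m⁻¹ * (A ^ c⁻¹ * B ^ β⁻¹) := mul_le_mul_right hH _
      _ = A ^ c⁻¹ * (m⁻¹ * B ^ β⁻¹) := by ring
  -- the equality at `c = γ + 1`
  have key_eq : ((( γ + 1)⁻¹ : ℝ) : EReal) * ENNReal.log (∫⁻ x, τ x ^ (γ + 1) ∂P)
      + ((((γ + 1) - 1)⁻¹ : ℝ) : EReal) * renyiDiv ((γ + 1) / ((γ + 1) - 1)) Qg P
      = ENNReal.log (m⁻¹ * T) := by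
    have hγ0 : γ ≠ 0 := hγ.ne'
    set β : ℝ := (γ + 1) / ((γ + 1) - 1) with hβ_def
    have hβeq : β = (γ + 1) / γ := by rw [hβ_def]; norm_num
    have hβ1 : 1 < β := by rw [hβeq, lt_div_iff₀ hγ]; linarith
    have hβ0 : β ≠ 0 := by intro h; rw [h] at hβ1; linarith
    have hγβ : γ * β = γ + 1 := by rw [hβeq]; field_simp
    rw [hRg β hβ1, hγβ, ← hT_def, ereal_coe_mul_assoc]
    have hco : ((γ + 1) - 1)⁻¹ * (β * (β - 1))⁻¹ = β⁻¹ := by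
      rw [hβeq]
      field_simp
      rw [show γ + 1 - 1 = γ by ring, div_self hγ0]; ring
    rw [hco]
    have hmβT : m ^ β ≠ ⊤ := ENNReal.rpow_ne_top_of_nonneg (by linarith) hmT
    have hmβ0 : m ^ β ≠ 0 := by
      simp only [ne_eq, ENNReal.rpow_eq_zero_iff, not_or]
      exact ⟨fun h => hm0 h.1, fun h => hmT h.1⟩
    rcases eq_or_ne T ⊤ with hT | hT
    · rw [hT, ENNReal.mul_top (ENNReal.inv_ne_zero.2 hmβT),
        ENNReal.mul_top (ENNReal.inv_ne_zero.2 hmT), ENNReal.log_top,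
      EReal.coe_mul_top_of_pos (by positivity),
        EReal.coe_mul_top_of_pos (by positivity)]
      rfl
    · have harg0 : (m ^ β)⁻¹ * T ≠ 0 := mul_ne_zero (ENNReal.inv_ne_zero.2 hmβT) hT0
      have hargT : (m ^ β)⁻¹ * T ≠ ⊤ := ENNReal.mul_ne_top (ENNReal.inv_ne_top.2 hmβ0) hT
      have harg0' : m⁻¹ * T ≠ 0 := mul_ne_zero (ENNReal.inv_ne_zero.2 hmT) hT0
      have hargT' : m⁻¹ * T ≠ ⊤ := ENNReal.mul_ne_top (ENNReal.inv_ne_top.2 hm0) hT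
      rw [ennreal_log_eq hT0 hT, ennreal_log_eq harg0 hargT, ennreal_log_eq harg0' hargT']
      norm_cast
      have hmtR : (0 : ℝ) < m.toReal := ENNReal.toReal_pos hm0 hmT
      have hTtR : (0 : ℝ) < T.toReal := ENNReal.toReal_pos hT0 hT
      rw [ENNReal.toReal_mul, ENNReal.toReal_mul, ENNReal.toReal_inv, ENNReal.toReal_inv,
        ← ENNReal.toReal_rpow,
        Real.log_mul (by positivity) (by positivity),
        Real.log_mul (by positivity) (by positivity),
        Real.log_inv, Real.log_inv, Real.log_rpow hmtR]
      rw [hβeq]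
      field_simp
      ring
  -- the sup upper bound over `Ubeta` at `β = 1 + γ⁻¹`
  set βs : ℝ := 1 + γ⁻¹ with hβs_def
  have hγi : (0 : ℝ) < γ⁻¹ := inv_pos.2 hγ
  have hβs1 : 1 < βs := by rw [hβs_def]; linarith
  have hγβs : γ * βs = γ + 1 := by rw [hβs_def]; field_simp
  have hsup_le : ∀ Q : Measure Ω, Q ∈ Ubeta P Qg βs →
      ENNReal.log (∫⁻ x, τ x ∂Q) ≤ ENNReal.log (m⁻¹ * T) := by
    rintro Q ⟨hQprob, hle⟩
    haveI := hQprob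
    rcases eq_or_ne T ⊤ with hT | hT
    · rw [hT, ENNReal.mul_top (ENNReal.inv_ne_zero.2 hmT), ENNReal.log_top]
      exact le_top
    have hmβT : m ^ βs ≠ ⊤ := ENNReal.rpow_ne_top_of_nonneg (by linarith) hmT
    have hmβ0 : m ^ βs ≠ 0 := by
      simp only [ne_eq, ENNReal.rpow_eq_zero_iff, not_or]
      exact ⟨fun h => hm0 h.1, fun h => hmT h.1⟩
    have harg0 : (m ^ βs)⁻¹ * T ≠ 0 := mul_ne_zero (ENNReal.inv_ne_zero.2 hmβT) hT0
    have hargT : (m ^ βs)⁻¹ * T ≠ ⊤ := ENNReal.mul_ne_top (ENNReal.inv_ne_top.2 hmβ0) hT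
    rw [hRg βs hβs1, hγβs, ← hT_def] at hle
    have hRfin : renyiDiv βs Q P ≠ ⊤ := by
      intro htop
      rw [htop, ennreal_log_eq harg0 hargT, ← EReal.coe_mul] at hle
      exact EReal.coe_ne_top _ (top_le_iff.1 hle)
    have hQP : Q ≪ P := by
      by_contra hnQP
      apply hRfin
      rw [renyiDiv, if_neg (not_lt.2 (by linarith)), renyiDivAux, if_pos ⟨hβs1, hnQP⟩]
    rw [renyiDiv_eq hQP hβs1] at hle
    have hr : (0 : ℝ) < (βs * (βs - 1))⁻¹ := by
      have : (0 : ℝ) < βs * (βs - 1) := by nlinarith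
      positivity
    have hXY : (∫⁻ x, (Q.rnDeriv P x) ^ βs ∂P) ≤ (m ^ βs)⁻¹ * T :=
      ENNReal.log_strictMono.le_iff_le.1 (ereal_mul_le_cancel hr hle)
    have hQint : (∫⁻ x, τ x ∂Q) = ∫⁻ x, τ x * Q.rnDeriv P x ∂P := by
      conv_lhs => rw [← Measure.withDensity_rnDeriv_eq Q P hQP]
      rw [lintegral_withDensity_eq_lintegral_mul _ (Measure.measurable_rnDeriv Q P) hτ]
      exact lintegral_congr fun x => by simp [mul_comm]
    apply ENNReal.log_monotone
    rw [hQint]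
    have hc1 : (1 : ℝ) < γ + 1 := by linarith
    have hβsc : βs = (γ + 1) / ((γ + 1) - 1) := by
      rw [hβs_def, show (γ + 1) - 1 = γ by ring]
      rw [eq_div_iff hγ.ne']
      field_simp
      try ring
    have hH := holder (γ + 1) hc1 _ (Measure.measurable_rnDeriv Q P)
    rw [← hβsc, ← hT_def] at hH
    have hstep : (∫⁻ x, τ x * Q.rnDeriv P x ∂P)
        ≤ T ^ (γ + 1)⁻¹ * ((m ^ βs)⁻¹ * T) ^ βs⁻¹ := by
      refine hH.trans ?_
      exact mul_le_mul_right (ENNReal.rpow_le_rpow hXY (by positivity)) _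
    refine hstep.trans ?_
    have hmulβ : ((m ^ βs)⁻¹ * T) ^ βs⁻¹ = m⁻¹ * T ^ βs⁻¹ := by
      rw [ENNReal.mul_rpow_of_nonneg _ _ (by positivity), ← ENNReal.inv_rpow,
        ← ENNReal.rpow_mul, mul_inv_cancel₀ (by positivity : βs ≠ 0), ENNReal.rpow_one]
    rw [hmulβ, ← mul_assoc, mul_comm (T ^ (γ + 1)⁻¹) m⁻¹, mul_assoc,
      ← ENNReal.rpow_add _ _ hT0 hT]
    have hexp : (γ + 1)⁻¹ + βs⁻¹ = 1 := by
      rw [hβs_def]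
      field_simp
      ring
    rw [hexp, ENNReal.rpow_one]
  have hmemUb : Qg ∈ Ubeta P Qg βs := ⟨hprob, le_rfl⟩
  have hγ1mem : (γ + 1 : ℝ) ∈ Set.Ioi (1 : ℝ) := Set.mem_Ioi.2 (by linarith)
  refine ⟨?_, ?_, ?_, ?_, ?_⟩
  · intro I
    exact ⟨⟨hprob, fun α _ => le_rfl⟩, fun β hβ Q hQ => ⟨hQ.1, hQ.2 β hβ⟩⟩
  · rw [hτQg]
    refine le_antisymm (iSup₂_le fun Q hQ => ?_) ?_
    · exact hsup_le Q ⟨hQ.1, hQ.2 βs (Set.mem_Ioi.2 hβs1)⟩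
    · refine le_iSup₂_of_le Qg ⟨hprob, fun α _ => le_rfl⟩ ?_
      rw [hτQg]
  · rw [hτQg]
    refine le_antisymm (iSup₂_le fun Q hQ => hsup_le Q hQ) ?_
    refine le_iSup₂_of_le Qg hmemUb ?_
    rw [hτQg]
  · rw [hτQg]
    refine le_antisymm (le_iInf₂ fun c hc => key_le c (Set.mem_Ioi.1 hc)) ?_
    exact (iInf₂_le _ hγ1mem).trans key_eq.le
  · refine le_antisymm (iInf₂_le _ hγ1mem) ?_
    rw [key_eq]
    exact le_iInf₂ fun c hc => key_le c (Set.mem_Ioi.1 hc)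
end

section
/- Let P be a probability measure on (Ω, M), τ : Ω → [0,∞] measurable, and γ ∈ (−1,0) with 0 < E_P[τ^γ] < ∞, τ < ∞ P-a.s., and E_P[τ^{γ+1}] < ∞. Define dQ_γ := τ^γ dP / E_P[τ^γ] and, for β ∈ ℝ and I ⊂ ℝ, U^γ_β(P) := { Q : R_β(Q‖P) ≤ R_β(Q_γ‖P) } and U_I^γ(P) := { Q : R_α(Q‖P) ≤ R_α(Q_γ‖P) for all α ∈ I }. Then inf_{Q ∈ U^γ_{(−∞,0)}(P)} log ∫ τ dQ = inf_{Q ∈ U^γ_{1+γ⁻¹}(P)} log ∫ τ dQ = log ∫ τ dQ_γ = sup_{c<1, c≠0} { c⁻¹ log ∫ τ^c dP − (1−c)⁻¹ R_{1/(1−c)}(P‖Q_γ) }, with the supremum achieved at c = γ + 1. -/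
open MeasureTheory Real Set Filter
open scoped ENNReal Classical

variable {Ω : Type*} [MeasurableSpace Ω]

lemma ereal_alg1 {c : ℝ} (hc0 : 0 < c) (hc1 : c < 1) {X Y L : EReal}
    (h : X ≤ (c : EReal) * Y + ((1 - c : ℝ) : EReal) * L) :
    ((c⁻¹ : ℝ) : EReal) * X - (((1 - c) / c : ℝ) : EReal) * L ≤ Y := by
  have hc1' : (0:ℝ) < 1 - c := by linarith
  induction L using EReal.rec with
  | top =>
    rw [EReal.coe_mul_top_of_pos (by positivity), EReal.sub_top]
    exact bot_le
  | bot =>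
    rw [EReal.coe_mul_bot_of_pos (by positivity), EReal.add_bot] at h
    rw [le_bot_iff.mp h, EReal.coe_mul_bot_of_pos (by positivity), EReal.bot_sub]
    exact bot_le
  | coe l =>
    induction Y using EReal.rec with
    | top => exact le_top
    | bot =>
      rw [EReal.coe_mul_bot_of_pos (by exact_mod_cast hc0), EReal.bot_add] at h
      rw [le_bot_iff.mp h, EReal.coe_mul_bot_of_pos (by positivity), EReal.bot_sub]
    | coe y =>
      induction X using EReal.rec with
      | top =>
        rw [← EReal.coe_mul, ← EReal.coe_mul, ← EReal.coe_add] at h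
        exact absurd h (EReal.coe_lt_top _).not_ge
      | bot =>
        rw [EReal.coe_mul_bot_of_pos (by positivity), EReal.bot_sub]
        exact bot_le
      | coe x =>
        rw [← EReal.coe_mul, ← EReal.coe_mul, ← EReal.coe_add, EReal.coe_le_coe_iff] at h
        rw [← EReal.coe_mul, ← EReal.coe_mul, ← EReal.coe_sub, EReal.coe_le_coe_iff]
        rw [div_mul_eq_mul_div, sub_div', div_le_iff₀ hc0]
        · have e1 : c⁻¹ * x * c = x := by
            rw [mul_comm c⁻¹ x, mul_assoc, inv_mul_cancel₀ hc0.ne', mul_one]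
          linarith
        · exact hc0.ne'

lemma ereal_alg2 {c : ℝ} (hc : c < 0) {X Y L : EReal}
    (h : L ≤ ((1 / (1 - c) : ℝ) : EReal) * X + ((-c / (1 - c) : ℝ) : EReal) * Y) :
    ((c⁻¹ : ℝ) : EReal) * X - (((1 - c) / c : ℝ) : EReal) * L ≤ Y := by
  have hc1' : (0:ℝ) < 1 - c := by linarith
  have hd : ((1 - c) / c : ℝ) < 0 := div_neg_of_pos_of_neg hc1' hc
  have hci : (c⁻¹ : ℝ) < 0 := inv_neg''.mpr hc
  induction X using EReal.rec with
  | top =>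
    rw [EReal.coe_mul_top_of_neg hci, EReal.bot_sub]; exact bot_le
  | bot =>
    rw [EReal.coe_mul_bot_of_pos (by positivity), EReal.bot_add] at h
    rw [le_bot_iff.mp h, EReal.coe_mul_bot_of_neg hd,
      EReal.coe_mul_bot_of_neg hci, EReal.sub_top]
    exact bot_le
  | coe x =>
    induction Y using EReal.rec with
    | top => exact le_top
    | bot =>
      rw [EReal.coe_mul_bot_of_pos (by exact div_pos (by linarith) hc1'), EReal.add_bot] at h
      rw [le_bot_iff.mp h, EReal.coe_mul_bot_of_neg hd, EReal.sub_top]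
    | coe y =>
      induction L using EReal.rec with
      | top =>
        rw [← EReal.coe_mul, ← EReal.coe_mul, ← EReal.coe_add] at h
        exact absurd h (EReal.coe_lt_top _).not_ge
      | bot =>
        rw [EReal.coe_mul_bot_of_neg hd, EReal.sub_top]
        exact bot_le
      | coe l =>
        rw [← EReal.coe_mul, ← EReal.coe_mul, ← EReal.coe_add, EReal.coe_le_coe_iff] at h
        rw [← EReal.coe_mul, ← EReal.coe_mul, ← EReal.coe_sub, EReal.coe_le_coe_iff]
        have h1 : (1 - c) * l ≤ x + (-c) * y := by
          have h2 := mul_le_mul_of_nonneg_left h hc1'.le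
          rw [mul_add] at h2
          have e1 : (1-c) * (1/(1-c) * x) = x := by field_simp
          have e2 : (1-c) * (-c/(1-c) * y) = -c * y := by field_simp
          linarith
        rw [div_mul_eq_mul_div, sub_div', div_le_iff_of_neg hc]
        · have e1 : c⁻¹ * x * c = x := by
            rw [mul_comm c⁻¹ x, mul_assoc, inv_mul_cancel₀ hc.ne, mul_one]
          linarith
        · exact hc.ne

lemma ae_rnDeriv_zero_on_null {P ν : Measure Ω} [P.HaveLebesgueDecomposition ν]
    (hPν : P ≪ ν) {s : Set Ω} (hs : MeasurableSet s) (h0 : P s = 0) :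
    ∀ᵐ x ∂ν, x ∈ s → P.rnDeriv ν x = 0 := by
  have h := Measure.setLIntegral_rnDeriv' hPν hs
  rw [h0] at h
  exact (setLIntegral_eq_zero_iff hs (Measure.measurable_rnDeriv P ν)).mp h

lemma dual_bound (P Q : Measure Ω) [IsProbabilityMeasure P] [IsProbabilityMeasure Q]
    (τ : Ω → ℝ≥0∞) (hτ : Measurable τ) (hae : ∀ᵐ x ∂P, τ x ≠ ⊤)
    {c : ℝ} (hc1 : c < 1) (hc0 : c ≠ 0) :
    ((c⁻¹ : ℝ) : EReal) * ENNReal.log (∫⁻ x, τ x ^ c ∂P)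
      - (((1 - c)⁻¹ : ℝ) : EReal) * renyiDivAux (1/(1-c)) P Q
      ≤ ENNReal.log (∫⁻ x, τ x ∂Q) := by
  have hc1' : (0:ℝ) < 1 - c := by linarith
  set α : ℝ := 1/(1-c) with hα
  have hαpos : 0 < α := by positivity
  set ν := Q + P with hν
  have hPν : P ≪ ν := Measure.absolutelyContinuous_of_le (Measure.le_add_left le_rfl)
  have hQν : Q ≪ ν := Measure.absolutelyContinuous_of_le (Measure.le_add_right le_rfl)
  set p := P.rnDeriv ν with hpd
  set q := Q.rnDeriv ν with hqd
  have hp : Measurable p := Measure.measurable_rnDeriv P ν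
  have hq : Measurable q := Measure.measurable_rnDeriv Q ν
  have hplt : ∀ᵐ x ∂ν, p x < ⊤ := Measure.rnDeriv_lt_top P ν
  have hqlt : ∀ᵐ x ∂ν, q x < ⊤ := Measure.rnDeriv_lt_top Q ν
  have hτtop : ∀ᵐ x ∂ν, τ x = ⊤ → p x = 0 := by
    refine ae_rnDeriv_zero_on_null hPν (hτ (measurableSet_singleton ⊤)) ?_
    exact measure_mono_null (fun x (hx : τ x = ⊤) => not_not.mpr hx) (ae_iff.mp hae)
  set S : Set Ω := {x | 0 < q x} with hS
  have hSm : MeasurableSet S := measurableSet_lt measurable_const hq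
  set I : ℝ≥0∞ := ∫⁻ x in S, p x ^ α * q x ^ (1-α) ∂ν with hI
  -- coefficient identity
  have hco : ((1 - c)⁻¹ * (α * (α - 1))⁻¹ : ℝ) = (1-c)/c := by
    rw [hα]; field_simp; rw [sub_sub_cancel, div_self hc0]
  have hcoe : (((1 - c)⁻¹ : ℝ) : EReal) * (((α * (α - 1))⁻¹ : ℝ) : EReal)
      = ((((1-c)/c) : ℝ) : EReal) := by rw [← EReal.coe_mul, hco]
  have hXdef : ENNReal.log (∫⁻ x, τ x ^ c ∂P) = ENNReal.log (∫⁻ x, p x * τ x ^ c ∂ν) := by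
    rw [lintegral_rnDeriv_mul hPν ((hτ.pow_const c).aemeasurable)]
  have hYdef : ENNReal.log (∫⁻ x, τ x ∂Q) = ENNReal.log (∫⁻ x, q x * τ x ∂ν) := by
    rw [lintegral_rnDeriv_mul hQν hτ.aemeasurable]
  rcases lt_or_gt_of_ne hc0 with hcneg | hcpos
  · -- c < 0, α ∈ (0,1)
    have hα1 : α < 1 := by rw [hα, div_lt_one hc1']; linarith
    have hif : ¬ (1 < α ∧ ¬ P ≪ Q) := by
      rw [not_and_or]; exact Or.inl (not_lt.mpr hα1.le)
    rw [renyiDivAux, if_neg hif, ← mul_assoc, hcoe]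
    by_cases hX : ∫⁻ x, τ x ^ c ∂P = ⊤
    · rw [hX, ENNReal.log_top, EReal.coe_mul_top_of_neg (inv_neg''.mpr hcneg), EReal.bot_sub]
      exact bot_le
    · have hτ0 : ∀ᵐ x ∂P, τ x ≠ 0 := by
        filter_upwards [ae_lt_top (hτ.pow_const c) hX] with x hx h0
        rw [h0, ENNReal.zero_rpow_of_neg hcneg] at hx
        exact absurd hx (lt_irrefl _)
      have hτ0p : ∀ᵐ x ∂ν, τ x = 0 → p x = 0 :=
        ae_rnDeriv_zero_on_null hPν (hτ (measurableSet_singleton 0))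
          (measure_mono_null (fun x (hx : τ x = 0) => not_not.mpr hx) (ae_iff.mp hτ0))
      have hptw : ∀ᵐ x ∂ν, p x ^ α * q x ^ (1-α)
          ≤ ((fun x => (τ x ^ c * p x) ^ α) * (fun x => (τ x * q x) ^ (1-α))) x := by
        filter_upwards [hplt, hqlt, hτtop, hτ0p] with x h1 h2 h3 h4
        simp only [Pi.mul_apply]
        by_cases hp0 : p x = 0
        · rw [hp0, ENNReal.zero_rpow_of_pos hαpos, zero_mul]; exact zero_le
        · have hτt : τ x ≠ ⊤ := fun h => hp0 (h3 h)
          have hτ0' : τ x ≠ 0 := fun h => hp0 (h4 h)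
          by_cases hq0 : q x = 0
          · rw [hq0, ENNReal.zero_rpow_of_pos (by linarith : (0:ℝ) < 1 - α), mul_zero]
            exact zero_le
          · refine le_of_eq ?_
            have hτc : τ x ^ c ≠ ⊤ := by
              simp [ENNReal.rpow_eq_top_iff, hτ0', hτt]
            rw [ENNReal.mul_rpow_of_ne_top hτc h1.ne, ENNReal.mul_rpow_of_ne_top hτt h2.ne,
              ← ENNReal.rpow_mul]
            calc p x ^ α * q x ^ (1-α)
                = (τ x ^ (c*α) * τ x ^ (1-α)) * (p x ^ α * q x ^ (1-α)) := by
                  rw [← ENNReal.rpow_add _ _ hτ0' hτt,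
                    (by rw [hα]; field_simp; ring : c*α + (1-α) = 0),
                    ENNReal.rpow_zero, one_mul]
              _ = τ x ^ (c*α) * p x ^ α * (τ x ^ (1-α) * q x ^ (1-α)) := by ring
      have hconj2 : (1/α).HolderConjugate (1/(1-α)) := by
        constructor
        · rw [one_div, one_div, inv_inv, inv_inv, inv_one]; ring
        · exact one_div_pos.mpr hαpos
        · exact one_div_pos.mpr (by linarith)
      have hf2 : AEMeasurable (fun x => (τ x ^ c * p x) ^ α) (ν.restrict S) :=
        (((hτ.pow_const c).mul hp).pow_const α).aemeasurable
      have hg2 : AEMeasurable (fun x => (τ x * q x) ^ (1-α)) (ν.restrict S) :=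
        ((hτ.mul hq).pow_const (1-α)).aemeasurable
      have hhold := ENNReal.lintegral_mul_le_Lp_mul_Lq (ν.restrict S) hconj2 hf2 hg2
      have e3 : ∀ x : ℝ≥0∞, (x ^ α) ^ (1/α : ℝ) = x := by
        intro x
        rw [← ENNReal.rpow_mul, mul_one_div, div_self hαpos.ne', ENNReal.rpow_one]
      have e4 : ∀ x : ℝ≥0∞, (x ^ (1-α)) ^ (1/(1-α) : ℝ) = x := by
        intro x
        rw [← ENNReal.rpow_mul, mul_one_div, div_self (by linarith : (1:ℝ) - α ≠ 0),
          ENNReal.rpow_one]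
      simp only [Pi.mul_apply, e3, e4, one_div_one_div] at hhold
      have hIle : I ≤ (∫⁻ x, τ x ^ c ∂P) ^ α * (∫⁻ x, τ x ∂Q) ^ (1-α) := by
        calc I ≤ ∫⁻ x in S, ((fun x => (τ x ^ c * p x) ^ α)
                * (fun x => (τ x * q x) ^ (1-α))) x ∂ν :=
              lintegral_mono_ae (ae_restrict_of_ae hptw)
          _ ≤ (∫⁻ x in S, τ x ^ c * p x ∂ν) ^ α * (∫⁻ x in S, τ x * q x ∂ν) ^ (1-α) := hhold
          _ ≤ (∫⁻ x, τ x ^ c * p x ∂ν) ^ α * (∫⁻ x, τ x * q x ∂ν) ^ (1-α) :=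
              mul_le_mul' (ENNReal.rpow_le_rpow (setLIntegral_le_lintegral _ _) hαpos.le)
                (ENNReal.rpow_le_rpow (setLIntegral_le_lintegral _ _)
                  (by linarith : (0:ℝ) ≤ 1 - α))
          _ = (∫⁻ x, τ x ^ c ∂P) ^ α * (∫⁻ x, τ x ∂Q) ^ (1-α) := by
              congr 1
              · congr 1
                rw [← lintegral_rnDeriv_mul hPν ((hτ.pow_const c).aemeasurable)]
                exact lintegral_congr (fun x => mul_comm _ _)
              · congr 1
                rw [← lintegral_rnDeriv_mul hQν hτ.aemeasurable]
                exact lintegral_congr (fun x => mul_comm _ _)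
      have hlog2 : ENNReal.log I
          ≤ ((1/(1-c) : ℝ) : EReal) * ENNReal.log (∫⁻ x, τ x ^ c ∂P)
            + ((-c/(1-c) : ℝ) : EReal) * ENNReal.log (∫⁻ x, τ x ∂Q) := by
        have h1α : (1 - α : ℝ) = -c/(1-c) := by rw [hα]; field_simp; ring
        calc ENNReal.log I
            ≤ ENNReal.log ((∫⁻ x, τ x ^ c ∂P) ^ α * (∫⁻ x, τ x ∂Q) ^ (1-α)) :=
              ENNReal.log_monotone hIle
          _ = _ := by rw [ENNReal.log_mul_add, ENNReal.log_rpow, ENNReal.log_rpow, h1α, hα]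
      exact ereal_alg2 hcneg hlog2
  · -- 0 < c, so 1 < α
    have hα1 : 1 < α := by rw [hα, lt_div_iff₀ hc1']; linarith
    by_cases hac : P ≪ Q
    · have hq0p : ∀ᵐ x ∂ν, q x = 0 → p x = 0 := by
        have hsm : MeasurableSet {x | q x = 0} := hq (measurableSet_singleton 0)
        have hQ0 : Q {x | q x = 0} = 0 := by
          rw [← Measure.setLIntegral_rnDeriv' hQν hsm]
          rw [setLIntegral_congr_fun hsm (fun x hx => hx)]
          simp
        exact ae_rnDeriv_zero_on_null hPν hsm (hac hQ0)
      -- pointwise identity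
      have hfg : ∀ᵐ x ∂ν, p x * τ x ^ c
          = ((fun x => (τ x * q x) ^ c) * (fun x => (p x ^ α * q x ^ (1-α)) ^ (1-c))) x := by
        filter_upwards [hplt, hqlt, hτtop, hq0p] with x h1 h2 h3 h4
        simp only [Pi.mul_apply]
        by_cases hp0 : p x = 0
        · simp [hp0, ENNReal.zero_rpow_of_pos hαpos, ENNReal.zero_rpow_of_pos hc1']
        · have hτt : τ x ≠ ⊤ := fun h => hp0 (h3 h)
          have hq0 : q x ≠ 0 := fun h => hp0 (h4 h)
          by_cases ht0 : τ x = 0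
          · simp [ht0, ENNReal.zero_rpow_of_pos hcpos]
          · -- all finite positive
            rw [ENNReal.mul_rpow_of_ne_top hτt h2.ne,
              ENNReal.mul_rpow_of_ne_top
                (ENNReal.rpow_ne_top_of_nonneg hαpos.le h1.ne)
                (by simp [ENNReal.rpow_eq_top_iff, hq0, h2.ne]),
              ← ENNReal.rpow_mul, ← ENNReal.rpow_mul]
            have e1 : α * (1-c) = 1 := by rw [hα]; field_simp
            have e2 : (1-α) * (1-c) = -c := by rw [hα]; field_simp; ring
            rw [e1, e2, ENNReal.rpow_one]
            symm
            calc τ x ^ c * q x ^ c * (p x * q x ^ (-c))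
                = τ x ^ c * p x * (q x ^ c * q x ^ (-c)) := by ring
              _ = τ x ^ c * p x * q x ^ (c + -c) := by
                  rw [ENNReal.rpow_add _ _ hq0 h2.ne]
              _ = p x * τ x ^ c := by
                  rw [add_neg_cancel, ENNReal.rpow_zero, mul_one, mul_comm]
      have hconj : (1/c).HolderConjugate (1/(1-c)) := by
        constructor
        · rw [one_div, one_div, inv_inv, inv_inv, inv_one]; ring
        · exact one_div_pos.mpr hcpos
        · exact one_div_pos.mpr hc1'
      have hf : AEMeasurable (fun x => (τ x * q x) ^ c) ν :=
        ((hτ.mul hq).pow_const c).aemeasurable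
      have hg : AEMeasurable (fun x => (p x ^ α * q x ^ (1-α)) ^ (1-c)) ν :=
        (((hp.pow_const α).mul (hq.pow_const (1-α))).pow_const (1-c)).aemeasurable
      have hhold := ENNReal.lintegral_mul_le_Lp_mul_Lq ν hconj hf hg
      -- simplify exponents in hhold
      have e3 : ∀ x : ℝ≥0∞, (x ^ c) ^ (1/c : ℝ) = x := by
        intro x
        rw [← ENNReal.rpow_mul, mul_one_div, div_self hc0, ENNReal.rpow_one]
      have e4 : ∀ x : ℝ≥0∞, (x ^ (1-c)) ^ (1/(1-c) : ℝ) = x := by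
        intro x
        rw [← ENNReal.rpow_mul, mul_one_div, div_self hc1'.ne', ENNReal.rpow_one]
      simp only [Pi.mul_apply, e3, e4, one_div_one_div] at hhold
      -- restricted = full
      have hrestrict : ∫⁻ x, p x ^ α * q x ^ (1-α) ∂ν = I := by
        rw [hI, ← lintegral_add_compl (fun x => p x ^ α * q x ^ (1-α)) hSm]
        have : ∫⁻ x in Sᶜ, p x ^ α * q x ^ (1-α) ∂ν = 0 := by
          rw [lintegral_eq_zero_iff (show Measurable (fun x => p x ^ α * q x ^ (1-α)) from (hp.pow_const α).mul (hq.pow_const (1-α)))]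
          filter_upwards [ae_restrict_of_ae hq0p, ae_restrict_mem hSm.compl] with x h1 h2
          have : q x = 0 := by simpa [hS, not_lt, le_zero_iff] using h2
          simp [h1 this, ENNReal.zero_rpow_of_pos hαpos]
        rw [this, add_zero]
      have hmain : ∫⁻ x, τ x ^ c ∂P ≤ (∫⁻ x, τ x ∂Q) ^ c * I ^ (1-c) := by
        calc ∫⁻ x, τ x ^ c ∂P = ∫⁻ x, p x * τ x ^ c ∂ν :=
              (lintegral_rnDeriv_mul hPν ((hτ.pow_const c).aemeasurable)).symm
          _ = ∫⁻ x, ((fun x => (τ x * q x) ^ c) * (fun x => (p x ^ α * q x ^ (1-α)) ^ (1-c))) x ∂ν :=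
              lintegral_congr_ae hfg
          _ ≤ (∫⁻ x, (τ x * q x) ∂ν) ^ c * (∫⁻ x, p x ^ α * q x ^ (1-α) ∂ν) ^ (1-c) := hhold
          _ = (∫⁻ x, τ x ∂Q) ^ c * I ^ (1-c) := by
              rw [hrestrict]
              congr 1
              congr 1
              rw [← lintegral_rnDeriv_mul hQν hτ.aemeasurable]
              exact lintegral_congr (fun x => mul_comm _ _)
      have hlog : ENNReal.log (∫⁻ x, τ x ^ c ∂P)
          ≤ (c : EReal) * ENNReal.log (∫⁻ x, τ x ∂Q) + ((1 - c : ℝ) : EReal) * ENNReal.log I := by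
        calc ENNReal.log (∫⁻ x, τ x ^ c ∂P)
            ≤ ENNReal.log ((∫⁻ x, τ x ∂Q) ^ c * I ^ (1-c)) := ENNReal.log_monotone hmain
          _ = _ := by rw [ENNReal.log_mul_add, ENNReal.log_rpow, ENNReal.log_rpow]
      -- unfold renyiDivAux
      rw [renyiDivAux, if_neg (by simp [hac])]
      rw [← mul_assoc, hcoe]
      exact ereal_alg1 hcpos hc1 hlog
    · rw [renyiDivAux, if_pos ⟨hα1, hac⟩, EReal.coe_mul_top_of_pos (by positivity), EReal.sub_top]
      exact bot_le

section Tilted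

variable {P : Measure Ω} {τ : Ω → ℝ≥0∞} {γ : ℝ}

lemma tilted_eq_withDensity (hτ : Measurable τ) :
    tiltedMeasure P τ γ = P.withDensity (fun x => (∫⁻ x, τ x ^ γ ∂P)⁻¹ * τ x ^ γ) := by
  rw [tiltedMeasure, ← withDensity_smul _ (hτ.pow_const γ)]
  congr 1

lemma tilted_isProb (hτ : Measurable τ)
    (hpos : 0 < ∫⁻ x, τ x ^ γ ∂P) (hfin : (∫⁻ x, τ x ^ γ ∂P) ≠ ⊤) :
    IsProbabilityMeasure (tiltedMeasure P τ γ) := by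
  constructor
  rw [tiltedMeasure, Measure.smul_apply, smul_eq_mul,
    withDensity_apply _ MeasurableSet.univ, setLIntegral_univ,
    ENNReal.inv_mul_cancel hpos.ne' hfin]

lemma ae_tau_ne_zero (hτ : Measurable τ) (hγ : γ < 0)
    (hfin : (∫⁻ x, τ x ^ γ ∂P) ≠ ⊤) : ∀ᵐ x ∂P, τ x ≠ 0 := by
  filter_upwards [ae_lt_top (hτ.pow_const γ) hfin] with x hx h0
  rw [h0, ENNReal.zero_rpow_of_neg hγ] at hx
  exact absurd hx (lt_irrefl _)

lemma tilted_lintegral (hτ : Measurable τ) (hγ : γ < 0)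
    (hfin : (∫⁻ x, τ x ^ γ ∂P) ≠ ⊤) (hae : ∀ᵐ x ∂P, τ x ≠ ⊤) :
    ∫⁻ x, τ x ∂(tiltedMeasure P τ γ)
      = (∫⁻ x, τ x ^ γ ∂P)⁻¹ * ∫⁻ x, τ x ^ (γ+1) ∂P := by
  rw [tiltedMeasure, lintegral_smul_measure,
    lintegral_withDensity_eq_lintegral_mul P (hτ.pow_const γ) hτ]
  congr 1
  refine lintegral_congr_ae ?_
  filter_upwards [ae_tau_ne_zero hτ hγ hfin, hae] with x h0 ht
  simp only [Pi.mul_apply]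
  rw [ENNReal.rpow_add _ _ h0 ht, ENNReal.rpow_one]

lemma tilted_ac (hτ : Measurable τ) (hγ : γ < 0)
    (hpos : 0 < ∫⁻ x, τ x ^ γ ∂P) (hfin : (∫⁻ x, τ x ^ γ ∂P) ≠ ⊤)
    (hae : ∀ᵐ x ∂P, τ x ≠ ⊤) :
    P ≪ tiltedMeasure P τ γ := by
  rw [tilted_eq_withDensity hτ]
  refine withDensity_absolutelyContinuous' (((hτ.pow_const γ).const_mul _).aemeasurable) ?_
  filter_upwards [hae] with x ht
  refine mul_ne_zero (ENNReal.inv_ne_zero.mpr hfin) ?_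
  simp [ENNReal.rpow_eq_zero_iff, ht, not_lt.mpr hγ.le, hγ]

lemma renyi_tilted [IsProbabilityMeasure P] (hτ : Measurable τ) (hγ : γ < 0) (α : ℝ)
    (hpos : 0 < ∫⁻ x, τ x ^ γ ∂P) (hfin : (∫⁻ x, τ x ^ γ ∂P) ≠ ⊤)
    (hae : ∀ᵐ x ∂P, τ x ≠ ⊤) :
    renyiDivAux α P (tiltedMeasure P τ γ)
      = (((α * (α - 1))⁻¹ : ℝ) : EReal) *
        ENNReal.log ((∫⁻ x, τ x ^ γ ∂P) ^ (α - 1) * ∫⁻ x, τ x ^ (γ * (1 - α)) ∂P) := by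
  set Z := ∫⁻ x, τ x ^ γ ∂P with hZ
  set Qg := tiltedMeasure P τ γ with hQgdef
  set g : Ω → ℝ≥0∞ := fun x => Z⁻¹ * τ x ^ γ with hgdef
  have hg : Measurable g := (hτ.pow_const γ).const_mul _
  have hτ0 : ∀ᵐ x ∂P, τ x ≠ 0 := ae_tau_ne_zero hτ hγ hfin
  have hg0 : ∀ᵐ x ∂P, g x ≠ 0 := by
    filter_upwards [hae] with x ht
    refine mul_ne_zero (ENNReal.inv_ne_zero.mpr hfin) ?_
    simp [ENNReal.rpow_eq_zero_iff, ht, not_lt.mpr hγ.le, hγ]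
  have hgt : ∀ᵐ x ∂P, g x ≠ ⊤ := by
    filter_upwards [hτ0] with x h0
    exact ENNReal.mul_ne_top (by simp [hpos.ne']) (by simp [ENNReal.rpow_eq_top_iff, h0, hγ.le, not_lt.mpr hγ.le])
  have hQg : Qg = P.withDensity g := tilted_eq_withDensity hτ
  have hPQg : P ≪ Qg := tilted_ac hτ hγ hpos hfin hae
  haveI : IsProbabilityMeasure Qg := tilted_isProb hτ hpos hfin
  set ν : Measure Ω := Qg + P with hν
  have hν'd : ν = P.withDensity (fun x => g x + 1) := by
    have : (fun x => g x + 1) = g + 1 := rfl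
    rw [hν, this, withDensity_add_left hg, withDensity_one, hQg]
  have hνP : ν ≪ P := by
    rw [hν'd]; exact withDensity_absolutelyContinuous P _
  have hg1m : Measurable (fun x => g x + 1) := hg.add measurable_const
  have hg1_ne0 : ∀ x, g x + 1 ≠ 0 := fun x => by simp
  have hP_eq : ν.withDensity (fun x => (g x + 1)⁻¹) = P := by
    rw [hν'd, ← withDensity_mul _ hg1m (show Measurable (fun x => (g x + 1)⁻¹) from hg1m.inv)]
    have he : (fun x => g x + 1) * (fun x => (g x + 1)⁻¹) =ᵐ[P] 1 := by
      filter_upwards [hgt] with x ht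
      simp only [Pi.mul_apply, Pi.one_apply]
      exact ENNReal.mul_inv_cancel (hg1_ne0 x) (by simp [ht])
    rw [withDensity_congr_ae he, withDensity_one]
  have hQg_eq : ν.withDensity (fun x => g x * (g x + 1)⁻¹) = Qg := by
    rw [hν'd, ← withDensity_mul _ hg1m (show Measurable (fun x => g x * (g x + 1)⁻¹) from hg.mul hg1m.inv)]
    have he : (fun x => g x + 1) * (fun x => g x * (g x + 1)⁻¹) =ᵐ[P] g := by
      filter_upwards [hgt] with x ht
      simp only [Pi.mul_apply]
      rw [mul_comm (g x + 1), mul_assoc,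
        ENNReal.inv_mul_cancel (hg1_ne0 x) (by simp [ht]), mul_one]
    rw [withDensity_congr_ae he, hQg]
  have hrnP : P.rnDeriv ν =ᵐ[ν] fun x => (g x + 1)⁻¹ := by
    rw [← hP_eq]
    exact Measure.rnDeriv_withDensity ν hg1m.inv
  have hrnQ : Qg.rnDeriv ν =ᵐ[ν] fun x => g x * (g x + 1)⁻¹ := by
    rw [← hQg_eq]
    exact Measure.rnDeriv_withDensity ν (hg.mul hg1m.inv)
  have hg0' : ∀ᵐ x ∂ν, g x ≠ 0 := hνP.ae_le hg0
  have hgt' : ∀ᵐ x ∂ν, g x ≠ ⊤ := hνP.ae_le hgt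
  -- restricted set is a.e. everything
  have hSae : ∀ᵐ x ∂ν, x ∈ {x | 0 < Qg.rnDeriv ν x} := by
    filter_upwards [hrnQ, hg0', hgt'] with x h1 h2 h3
    show 0 < Qg.rnDeriv ν x
    rw [h1, pos_iff_ne_zero]
    exact mul_ne_zero h2 (by simp [hg1_ne0 x, (by simp [h3] : g x + 1 ≠ ⊤)])
  have hset : ∫⁻ x in {x | 0 < Qg.rnDeriv ν x},
        (P.rnDeriv ν x) ^ α * (Qg.rnDeriv ν x) ^ (1 - α) ∂ν
      = ∫⁻ x, (P.rnDeriv ν x) ^ α * (Qg.rnDeriv ν x) ^ (1 - α) ∂ν := by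
    rw [setLIntegral_congr ((ae_eq_univ).mpr ?_), setLIntegral_univ]
    exact ae_iff.mp hSae
  have hJ : ∫⁻ x, (P.rnDeriv ν x) ^ α * (Qg.rnDeriv ν x) ^ (1 - α) ∂ν
      = Z ^ (α - 1) * ∫⁻ x, τ x ^ (γ * (1 - α)) ∂P := by
    have step1 : ∫⁻ x, (P.rnDeriv ν x) ^ α * (Qg.rnDeriv ν x) ^ (1 - α) ∂ν
        = ∫⁻ x, ((g x + 1)⁻¹) ^ α * (g x * (g x + 1)⁻¹) ^ (1 - α) ∂ν := by
      refine lintegral_congr_ae ?_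
      filter_upwards [hrnP, hrnQ] with x h1 h2
      rw [h1, h2]
    have step2 : ∫⁻ x, ((g x + 1)⁻¹) ^ α * (g x * (g x + 1)⁻¹) ^ (1 - α) ∂ν
        = ∫⁻ x, (g x + 1) * (((g x + 1)⁻¹) ^ α * (g x * (g x + 1)⁻¹) ^ (1 - α)) ∂P := by
      rw [hν'd, lintegral_withDensity_eq_lintegral_mul P hg1m
        (show Measurable (fun x => ((g x + 1)⁻¹) ^ α * (g x * (g x + 1)⁻¹) ^ (1 - α)) from
          (hg1m.inv.pow_const α).mul ((hg.mul hg1m.inv).pow_const (1-α)))]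
      rfl
    have step3 : ∫⁻ x, (g x + 1) * (((g x + 1)⁻¹) ^ α * (g x * (g x + 1)⁻¹) ^ (1 - α)) ∂P
        = ∫⁻ x, g x ^ (1 - α) ∂P := by
      refine lintegral_congr_ae ?_
      filter_upwards [hg0, hgt] with x h2 h3
      have h1t : g x + 1 ≠ ⊤ := by simp [h3]
      have hinv0 : (g x + 1)⁻¹ ≠ 0 := by simp [h1t]
      have hinvt : (g x + 1)⁻¹ ≠ ⊤ := by simp [hg1_ne0 x]
      rw [ENNReal.mul_rpow_of_ne_top h3 hinvt]
      calc (g x + 1) * ((g x + 1)⁻¹ ^ α * (g x ^ (1-α) * (g x + 1)⁻¹ ^ (1-α)))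
          = (g x + 1) * ((g x + 1)⁻¹ ^ α * (g x + 1)⁻¹ ^ (1-α)) * g x ^ (1-α) := by ring
        _ = (g x + 1) * (g x + 1)⁻¹ * g x ^ (1-α) := by
            rw [← ENNReal.rpow_add _ _ hinv0 hinvt, add_sub_cancel, ENNReal.rpow_one]
        _ = g x ^ (1-α) := by
            rw [ENNReal.mul_inv_cancel (hg1_ne0 x) h1t, one_mul]
    have step4 : ∫⁻ x, g x ^ (1 - α) ∂P
        = Z ^ (α - 1) * ∫⁻ x, τ x ^ (γ * (1 - α)) ∂P := by
      have he : ∀ᵐ x ∂P, g x ^ (1-α) = Z ^ (α - 1) * τ x ^ (γ * (1 - α)) := by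
        filter_upwards [hae, hτ0] with x ht ht0
        rw [hgdef]
        rw [ENNReal.mul_rpow_of_ne_top (by simp [hpos.ne'])
          (by simp [ENNReal.rpow_eq_top_iff, ht, ht0, hγ, not_lt.mpr hγ.le]),
          ← ENNReal.rpow_mul, ENNReal.inv_rpow, ← ENNReal.rpow_neg, neg_sub]
      rw [lintegral_congr_ae he,
        lintegral_const_mul _ (hτ.pow_const _)]
    rw [step1, step2, step3, step4]
  rw [renyiDivAux, if_neg (by simp [hPQg]), ← hν, hset, hJ]

end Tilted

/-- **Tightness over ambiguity sets, order in `(-1,0)` (Theorem 7.2(2)).** For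
`γ ∈ (-1,0)` with `0 < E_P[τ^γ] < ∞`, `τ < ∞` `P`-a.s., and `E_P[τ^{γ+1}] < ∞`:
`inf_{Q ∈ U^γ_{(-∞,0)}} log ∫ τ dQ = inf_{Q ∈ U^γ_{1+γ⁻¹}} log ∫ τ dQ = log ∫ τ dQ_γ
 = sup_{c<1, c≠0} { c⁻¹ log ∫ τ^c dP - (1-c)⁻¹ R_{1/(1-c)}(P‖Q_γ) }`,
with the supremum achieved at `c = γ + 1`. -/
theorem tightness_negative_order (P : Measure Ω) [IsProbabilityMeasure P]
    (τ : Ω → ℝ≥0∞) (hτ : Measurable τ) (γ : ℝ) (hγ₁ : -1 < γ) (hγ₂ : γ < 0)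
    (hpos : 0 < ∫⁻ x, τ x ^ γ ∂P) (hfin : (∫⁻ x, τ x ^ γ ∂P) ≠ ⊤)
    (hae : ∀ᵐ x ∂P, τ x ≠ ⊤)
    (hfin' : (∫⁻ x, τ x ^ (γ + 1) ∂P) ≠ ⊤) :
    (⨅ Q ∈ UIdx P (tiltedMeasure P τ γ) (Set.Iio (0 : ℝ)),
        ENNReal.log (∫⁻ x, τ x ∂Q)) =
      ENNReal.log (∫⁻ x, τ x ∂(tiltedMeasure P τ γ)) ∧
    (⨅ Q ∈ Ubeta P (tiltedMeasure P τ γ) (1 + γ⁻¹),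
        ENNReal.log (∫⁻ x, τ x ∂Q)) =
      ENNReal.log (∫⁻ x, τ x ∂(tiltedMeasure P τ γ)) ∧
    ENNReal.log (∫⁻ x, τ x ∂(tiltedMeasure P τ γ)) =
      (⨆ c ∈ {c : ℝ | c < 1 ∧ c ≠ 0},
        ((c⁻¹ : ℝ) : EReal) * ENNReal.log (∫⁻ x, τ x ^ c ∂P)
          - (((1 - c)⁻¹ : ℝ) : EReal) *
              renyiDiv (1 / (1 - c)) P (tiltedMeasure P τ γ)) ∧
    (⨆ c ∈ {c : ℝ | c < 1 ∧ c ≠ 0},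
        ((c⁻¹ : ℝ) : EReal) * ENNReal.log (∫⁻ x, τ x ^ c ∂P)
          - (((1 - c)⁻¹ : ℝ) : EReal) *
              renyiDiv (1 / (1 - c)) P (tiltedMeasure P τ γ)) =
      (((γ + 1)⁻¹ : ℝ) : EReal) * ENNReal.log (∫⁻ x, τ x ^ (γ + 1) ∂P)
        - (((1 - (γ + 1))⁻¹ : ℝ) : EReal) *
            renyiDiv (1 / (1 - (γ + 1))) P (tiltedMeasure P τ γ) := by
  have hγ0 : γ ≠ 0 := hγ₂.ne
  have hγ10 : γ + 1 ≠ 0 := by linarith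
  have hc1 : γ + 1 < 1 := by linarith
  haveI hQgP : IsProbabilityMeasure (tiltedMeasure P τ γ) := tilted_isProb hτ hpos hfin
  have hτ0 : ∀ᵐ x ∂P, τ x ≠ 0 := ae_tau_ne_zero hτ hγ₂ hfin
  have hβneg : (1:ℝ) + γ⁻¹ < 0 := by nlinarith [mul_inv_cancel₀ hγ0]
  have hM0 : (∫⁻ x, τ x ^ (γ+1) ∂P) ≠ 0 := by
    intro h
    have h1 := (lintegral_eq_zero_iff (hτ.pow_const (γ+1))).mp h
    have h2 : ∀ᵐ (x : Ω) ∂P, False := by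
      filter_upwards [h1, hτ0] with x e1 e2
      rcases ENNReal.rpow_eq_zero_iff.mp e1 with ⟨h', _⟩ | ⟨_, h'⟩
      · exact e2 h'
      · linarith
    simpa [measure_univ] using ae_iff.mp h2
  have hTQg : ∫⁻ x, τ x ∂(tiltedMeasure P τ γ)
      = (∫⁻ x, τ x ^ γ ∂P)⁻¹ * ∫⁻ x, τ x ^ (γ+1) ∂P := tilted_lintegral hτ hγ₂ hfin hae
  set a := Real.log (∫⁻ x, τ x ^ γ ∂P).toReal with hadef
  set b := Real.log (∫⁻ x, τ x ^ (γ+1) ∂P).toReal with hbdef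
  have hlogZ : ENNReal.log (∫⁻ x, τ x ^ γ ∂P) = (a : EReal) :=
    ENNReal.log_pos_real hpos.ne' hfin
  have hlogM : ENNReal.log (∫⁻ x, τ x ^ (γ+1) ∂P) = (b : EReal) :=
    ENNReal.log_pos_real hM0 hfin'
  have hlogT : ENNReal.log (∫⁻ x, τ x ∂(tiltedMeasure P τ γ)) = ((b - a : ℝ) : EReal) := by
    rw [hTQg, ENNReal.log_mul_add, ENNReal.log_inv, hlogZ, hlogM]
    norm_cast
    ring
  have hexp : γ * (1 - 1/(1-(γ+1))) = γ + 1 := by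
    have h : (1:ℝ) - (γ+1) = -γ := by ring
    rw [h, one_div, inv_neg, sub_neg_eq_add, mul_add, mul_inv_cancel₀ hγ0, mul_one]
  have hbpos : (0:ℝ) < 1/(1-(γ+1)) := one_div_pos.mpr (by linarith)
  have hrenAux : renyiDivAux (1/(1-(γ+1))) P (tiltedMeasure P τ γ)
      = (((1/(1-(γ+1)) * (1/(1-(γ+1)) - 1))⁻¹ : ℝ) : EReal)
        * (((1/(1-(γ+1)) - 1) * a + b : ℝ) : EReal) := by
    rw [renyi_tilted hτ hγ₂ _ hpos hfin hae]
    simp only [hexp]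
    rw [ENNReal.log_mul_add, ENNReal.log_rpow, hlogZ, hlogM]
    norm_cast
  have hvalueAux : (((γ+1)⁻¹ : ℝ) : EReal) * ENNReal.log (∫⁻ x, τ x ^ (γ+1) ∂P)
      - (((1-(γ+1))⁻¹ : ℝ) : EReal) * renyiDivAux (1/(1-(γ+1))) P (tiltedMeasure P τ γ)
      = ((b - a : ℝ) : EReal) := by
    rw [hlogM, hrenAux, ← EReal.coe_mul, ← EReal.coe_mul, ← EReal.coe_mul, ← EReal.coe_sub]
    norm_cast
    have hne : (1:ℝ) - (γ+1) ≠ 0 := by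
      intro h; apply hγ0; linarith
    have key : ∀ A B u v : ℝ, u ≠ 0 → 1 - u ≠ 0 → v = 1 - u →
        v⁻¹ * B - u⁻¹ * ((1/u * (1/u - 1))⁻¹ * ((1/u - 1) * A + B)) = B - A := by
      intro A B u v hu hv0 hv
      subst hv
      have h1 : (1:ℝ)/u - 1 = (1-u)/u := by field_simp
      have h2 : (1:ℝ)/u * ((1-u)/u) = (1-u)/(u*u) := by ring
      rw [h1, h2, inv_div]
      field_simp
      ring
    exact key a b _ _ hne (by intro h; exact hγ10 (by linarith)) (by ring)
  have hrdneg : ¬ ((1:ℝ)/(1-(γ+1)) < 0) := not_lt.mpr hbpos.le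
  have hvalue : (((γ+1)⁻¹ : ℝ) : EReal) * ENNReal.log (∫⁻ x, τ x ^ (γ+1) ∂P)
      - (((1-(γ+1))⁻¹ : ℝ) : EReal) * renyiDiv (1/(1-(γ+1))) P (tiltedMeasure P τ γ)
      = ((b - a : ℝ) : EReal) := by
    rw [renyiDiv, if_neg hrdneg]
    exact hvalueAux
  -- lower bound for all measures in the constraint sets
  have hLB : ∀ Q : Measure Ω, IsProbabilityMeasure Q →
      renyiDiv (1+γ⁻¹) Q P ≤ renyiDiv (1+γ⁻¹) (tiltedMeasure P τ γ) P →
      ((b - a : ℝ) : EReal) ≤ ENNReal.log (∫⁻ x, τ x ∂Q) := by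
    intro Q hQp hle
    haveI := hQp
    rw [renyiDiv, if_pos hβneg, renyiDiv, if_pos hβneg] at hle
    have h1β : (1:ℝ) - (1+γ⁻¹) = 1/(1-(γ+1)) := by
      field_simp; rw [eq_div_iff (by intro h; apply hγ0; linarith)]; ring
    rw [h1β] at hle
    have hdb := dual_bound P Q τ hτ hae hc1 hγ10
    have hwnn : (0:EReal) ≤ (((1-(γ+1))⁻¹ : ℝ) : EReal) :=
      EReal.coe_nonneg.mpr (inv_nonneg.mpr (by linarith))
    calc ((b - a : ℝ) : EReal)
        = (((γ+1)⁻¹ : ℝ) : EReal) * ENNReal.log (∫⁻ x, τ x ^ (γ+1) ∂P)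
          - (((1-(γ+1))⁻¹ : ℝ) : EReal)
            * renyiDivAux (1/(1-(γ+1))) P (tiltedMeasure P τ γ) := hvalueAux.symm
      _ ≤ (((γ+1)⁻¹ : ℝ) : EReal) * ENNReal.log (∫⁻ x, τ x ^ (γ+1) ∂P)
          - (((1-(γ+1))⁻¹ : ℝ) : EReal) * renyiDivAux (1/(1-(γ+1))) P Q :=
        EReal.sub_le_sub le_rfl (mul_le_mul_of_nonneg_left hle hwnn)
      _ ≤ ENNReal.log (∫⁻ x, τ x ∂Q) := hdb
  have hβmem : (1:ℝ) + γ⁻¹ ∈ Set.Iio (0:ℝ) := hβneg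
  have hpart1 : (⨅ Q ∈ UIdx P (tiltedMeasure P τ γ) (Set.Iio (0 : ℝ)),
      ENNReal.log (∫⁻ x, τ x ∂Q)) = ENNReal.log (∫⁻ x, τ x ∂(tiltedMeasure P τ γ)) := by
    apply le_antisymm
    · exact iInf₂_le (tiltedMeasure P τ γ) ⟨hQgP, fun _ _ => le_rfl⟩
    · refine le_iInf₂ fun Q hQ => ?_
      rw [hlogT]
      exact hLB Q hQ.1 (hQ.2 _ hβmem)
  have hpart2 : (⨅ Q ∈ Ubeta P (tiltedMeasure P τ γ) (1 + γ⁻¹),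
      ENNReal.log (∫⁻ x, τ x ∂Q)) = ENNReal.log (∫⁻ x, τ x ∂(tiltedMeasure P τ γ)) := by
    apply le_antisymm
    · exact iInf₂_le (tiltedMeasure P τ γ) ⟨hQgP, le_rfl⟩
    · refine le_iInf₂ fun Q hQ => ?_
      rw [hlogT]
      exact hLB Q hQ.1 hQ.2
  have hF_le : ∀ c ∈ {c : ℝ | c < 1 ∧ c ≠ 0},
      ((c⁻¹ : ℝ) : EReal) * ENNReal.log (∫⁻ x, τ x ^ c ∂P)
        - (((1 - c)⁻¹ : ℝ) : EReal) * renyiDiv (1 / (1 - c)) P (tiltedMeasure P τ γ)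
      ≤ ENNReal.log (∫⁻ x, τ x ∂(tiltedMeasure P τ γ)) := by
    intro c hc
    rw [renyiDiv, if_neg (not_lt.mpr (one_div_pos.mpr (by linarith [hc.1])).le)]
    exact dual_bound P (tiltedMeasure P τ γ) τ hτ hae hc.1 hc.2
  have hmemc : (γ + 1) ∈ {c : ℝ | c < 1 ∧ c ≠ 0} := ⟨hc1, hγ10⟩
  have hpart3 : ENNReal.log (∫⁻ x, τ x ∂(tiltedMeasure P τ γ)) =
      (⨆ c ∈ {c : ℝ | c < 1 ∧ c ≠ 0},
        ((c⁻¹ : ℝ) : EReal) * ENNReal.log (∫⁻ x, τ x ^ c ∂P)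
          - (((1 - c)⁻¹ : ℝ) : EReal) *
              renyiDiv (1 / (1 - c)) P (tiltedMeasure P τ γ)) := by
    apply le_antisymm
    · rw [hlogT, ← hvalue]
      exact le_biSup (fun c => ((c⁻¹ : ℝ) : EReal) * ENNReal.log (∫⁻ x, τ x ^ c ∂P)
        - (((1 - c)⁻¹ : ℝ) : EReal) * renyiDiv (1 / (1 - c)) P (tiltedMeasure P τ γ)) hmemc
    · exact iSup₂_le hF_le
  refine ⟨hpart1, hpart2, hpart3, ?_⟩
  rw [← hpart3, hlogT, hvalue]
end
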